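/- arXiv:1702.00190 — 2 statements merged into one kernel-verified Lean document; each statement's English description precedes it below -/
import Mathlib

section
/- If δ is a symbolic ternary metric on X, then the set of all quartets generated by δ is a quartet system on X that is thin, transitive, and saturated. -/
namespace PhyloPaper

variable {V X M : Type}

/-- The degree of a vertex: the number of its neighbors. -/
noncomputable def deg (G : SimpleGraph V) (v : V) : ℕ := (G.neighborSet v).ncard

/-- `v` lies on the (unique, in a tree) path between `x` and `y`. -/
def OnPath (G : SimpleGraph V) (x y v : V) : Prop :=
  ∀ p : G.Walk x y, p.IsPath → v ∈ p.support

/-- `m` is a median of `x, y, z`: it lies on all three pairwise paths. -/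
def IsMedian (G : SimpleGraph V) (x y z m : V) : Prop :=
  OnPath G x y m ∧ OnPath G y z m ∧ OnPath G x z m

/-- An (unrooted) phylogenetic tree on `X`: a tree whose leaf set is (the image of) `X`
and which has no vertex of degree 2. -/
structure IsPhyloTree (G : SimpleGraph V) (leaf : X → V) : Prop where
  isTree : G.IsTree
  leaf_inj : Function.Injective leaf
  leaf_iff : ∀ v : V, (∃ x : X, leaf x = v) ↔ deg G v = 1
  no_deg_two : ∀ v : V, deg G v ≠ 2

/-- A phylogenetic tree is binary if every interior vertex (degree ≥ 2) has degree 3. -/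
def IsBinary (G : SimpleGraph V) : Prop := ∀ v : V, 2 ≤ deg G v → deg G v = 3

/-- A symbolic dating map sends every leaf to `⊙` (modelled as `none`). -/
def IsDatingMap (leaf : X → V) (t : V → Option M) : Prop := ∀ x : X, t (leaf x) = none

/-- A dating map is discriminating if adjacent vertices get different values. -/
def Discriminating (G : SimpleGraph V) (t : V → Option M) : Prop :=
  ∀ u v : V, G.Adj u v → t u ≠ t v

/-- `δ` is the ternary map induced by the dated tree `(G, leaf, t)`:
`δ x y z = t (med (leaf x) (leaf y) (leaf z))`. -/
def InducedDelta (G : SimpleGraph V) (leaf : X → V) (t : V → Option M)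
    (δ : X → X → X → Option M) : Prop :=
  ∀ x y z : X, ∃ m : V, IsMedian G (leaf x) (leaf y) (leaf z) m ∧ δ x y z = t m

/-- The (well-defined, for symmetric `δ`) value of `δ` on a 3-element subset `T` is `a`. -/
def ValOn (δ : X → X → X → Option M) [DecidableEq X] (T : Finset X) (a : Option M) : Prop :=
  ∃ x y z : X, x ≠ y ∧ x ≠ z ∧ y ≠ z ∧ T = {x, y, z} ∧ δ x y z = a

/-- `S` is `n`-`m` partitioned by `δ`: `δ` takes exactly two values on the 3-element
subsets of `S`, one value on exactly `n` of them and the other on exactly `m` of them. -/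
def Partitioned [DecidableEq X] (δ : X → X → X → Option M) (S : Finset X) (n m : ℕ) : Prop :=
  ∃ a b : Option M, a ≠ b ∧
    {T : Finset X | T ∈ S.powersetCard 3 ∧ ValOn δ T a}.ncard = n ∧
    {T : Finset X | T ∈ S.powersetCard 3 ∧ ValOn δ T b}.ncard = m ∧
    ∀ T ∈ S.powersetCard 3, ValOn δ T a ∨ ValOn δ T b

/-- Condition (1): `δ` is symmetric under all permutations of its arguments. -/
def Symm3 (δ : X → X → X → Option M) : Prop :=
  ∀ x y z : X, δ x y z = δ y x z ∧ δ x y z = δ x z y ∧ δ x y z = δ z y x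

/-- Condition (2): `δ x y z = ⊙` iff `x, y, z` are not pairwise distinct. -/
def VanishCond (δ : X → X → X → Option M) : Prop :=
  ∀ x y z : X, δ x y z = none ↔ (x = y ∨ y = z ∨ x = z)

/-- `a, b, c, d` are pairwise distinct. -/
def P4 (a b c d : X) : Prop := a ≠ b ∧ a ≠ c ∧ a ≠ d ∧ b ≠ c ∧ b ≠ d ∧ c ≠ d

/-- `a, b, c, d, e` are pairwise distinct. -/
def P5 (a b c d e : X) : Prop := P4 a b c d ∧ a ≠ e ∧ b ≠ e ∧ c ≠ e ∧ d ≠ e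

/-- Condition (3): on four distinct taxa `δ` takes at most 2 values, and if exactly 2,
then the 4-set is 2-2 partitioned. -/
def FourPointCond [DecidableEq X] (δ : X → X → X → Option M) : Prop :=
  ∀ x y z u : X, P4 x y z u →
    ({δ x y z, δ x y u, δ x z u, δ y z u} : Set (Option M)).ncard ≤ 2 ∧
    (({δ x y z, δ x y u, δ x z u, δ y z u} : Set (Option M)).ncard = 2 →
      Partitioned δ ({x, y, z, u} : Finset X) 2 2)

/-- Condition (4): no 5-element subset of `X` is 5-5 partitioned by `δ`. -/
def FivePointCond [DecidableEq X] (δ : X → X → X → Option M) : Prop :=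
  ∀ S : Finset X, S.card = 5 → ¬ Partitioned δ S 5 5

/-- A symbolic ternary metric. -/
def IsSymbolicTernaryMetric [DecidableEq X] (δ : X → X → X → Option M) : Prop :=
  Symm3 δ ∧ VanishCond δ ∧ FourPointCond δ ∧ FivePointCond δ

/-- Condition (*): `δ` is fully resolved. -/
def FullyResolved [DecidableEq X] (δ : X → X → X → Option M) : Prop :=
  ∀ x y z u : X, P4 x y z u →
    ({δ x y z, δ x y u, δ x z u, δ y z u} : Set (Option M)).ncard = 1 →
    ∃ e : X, Partitioned δ ({x, y, z, u, e} : Finset X) 4 6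

/-- The tree displays the quartet `ab|cd`: the path from `a` to `b` is
vertex-disjoint from the path from `c` to `d`. -/
def Displays (G : SimpleGraph V) (leaf : X → V) (a b c d : X) : Prop :=
  ∃ p : G.Walk (leaf a) (leaf b), p.IsPath ∧
    ∃ q : G.Walk (leaf c) (leaf d), q.IsPath ∧ ∀ v : V, v ∈ p.support → v ∉ q.support

/-- `Q a b c d` represents membership of the quartet `ab|cd`; a quartet system must be
invariant under the symmetries of quartets and only contain genuine quartets. -/
def IsQuartetSystem (Q : X → X → X → X → Prop) : Prop :=
  ∀ a b c d : X, (Q a b c d → P4 a b c d) ∧ (Q a b c d ↔ Q b a c d) ∧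
    (Q a b c d ↔ Q a b d c) ∧ (Q a b c d ↔ Q c d a b)

/-- Thin: at most one of the three quartets on any 4 taxa. -/
def Thin (Q : X → X → X → X → Prop) : Prop :=
  ∀ a b c d : X, P4 a b c d →
    ¬(Q a b c d ∧ Q a c b d) ∧ ¬(Q a b c d ∧ Q a d b c) ∧ ¬(Q a c b d ∧ Q a d b c)

/-- Transitive quartet system. -/
def TransitiveQ (Q : X → X → X → X → Prop) : Prop :=
  ∀ a b c d e : X, P5 a b c d e → Q a b c e → Q a b d e → Q a b c d

/-- Saturated quartet system. -/
def SaturatedQ (Q : X → X → X → X → Prop) : Prop :=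
  ∀ a b c d e : X, P5 a b c d e → Q a b c d → (Q a e c d ∨ Q a b c e)

/-- Complete: exactly one of the three quartets on any 4 distinct taxa. -/
def CompleteQ (Q : X → X → X → X → Prop) : Prop :=
  ∀ a b c d : X, P4 a b c d →
    (Q a b c d ∨ Q a c b d ∨ Q a d b c) ∧
    ¬(Q a b c d ∧ Q a c b d) ∧ ¬(Q a b c d ∧ Q a d b c) ∧ ¬(Q a c b d ∧ Q a d b c)

/-- `δ` generates the quartet `xy|zu`. -/
def Generates (δ : X → X → X → Option M) (x y z u : X) : Prop :=
  P4 x y z u ∧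
  ((δ x z u = δ y z u ∧ δ y z u ≠ δ x y z ∧ δ x y z = δ x y u) ∨
   (δ x y z = δ x y u ∧ δ x y u = δ x z u ∧ δ x z u = δ y z u ∧
    ∃ e : X, δ x y e = δ x y z ∧ δ z u e = δ x y z ∧
      δ x u e ≠ δ x y z ∧ δ x u e = δ x z e ∧ δ x z e = δ y z e ∧ δ y z e = δ y u e))

/-- A rooted phylogenetic tree on `X` with root `ρ`: a tree whose leaves (in the rooted
sense: out-degree 0, i.e. non-root vertices of degree 1) are exactly the image of `X`,
and with no non-root vertex of in-degree one and out-degree one (i.e. degree 2). -/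
structure IsRootedPhyloTree (G : SimpleGraph V) (ρ : V) (leaf : X → V) : Prop where
  isTree : G.IsTree
  leaf_inj : Function.Injective leaf
  leaf_iff : ∀ v : V, (∃ x : X, leaf x = v) ↔ (v ≠ ρ ∧ deg G v = 1)
  no_in_out_deg_one : ∀ v : V, v ≠ ρ → deg G v ≠ 2

/-- `d` is the binary map induced by the rooted dated tree:
`d x y = t (lca x y)`, where the last common ancestor is the median of `ρ, x, y`. -/
def InducedD (G : SimpleGraph V) (ρ : V) (leaf : X → V) (t : V → Option M)
    (d : X → X → Option M) : Prop :=
  ∀ x y : X, ∃ m : V, IsMedian G ρ (leaf x) (leaf y) m ∧ d x y = t m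

/-- Symbolic ultrametric: conditions (U1)-(U4). -/
def IsSymbolicUltrametric (d : X → X → Option M) : Prop :=
  (∀ x y : X, d x y = none ↔ x = y) ∧
  (∀ x y : X, d x y = d y x) ∧
  (∀ x y z : X, ({d x y, d x z, d y z} : Set (Option M)).ncard ≤ 2) ∧
  ¬ ∃ x y u v : X, P4 x y u v ∧ d x y = d y u ∧ d y u = d u v ∧
      d u v ≠ d y v ∧ d y v = d x v ∧ d x v = d x u

/-- `x` and `y` are `m`-equivalent with respect to `δ`. -/
def MEquiv (δ : X → X → X → Option M) (m : Option M) (x y : X) : Prop :=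
  (∃ z : X, δ x y z = m) ∧
  ∀ u v : X, u ≠ x → u ≠ y → v ≠ x → v ≠ y → (δ x u v = m ↔ δ y u v = m)

/-- `x ∼_δ y`: `x` and `y` are `m`-equivalent for some `m`. -/
def DeltaEquiv (δ : X → X → X → Option M) (x y : X) : Prop :=
  ∃ m : Option M, MEquiv δ m x y

/-- `C` is a pseudo-cherry of the tree: `C` has at least 2 elements and is exactly the
set of leaves adjacent to some interior vertex `v`. -/
def IsPseudoCherry (G : SimpleGraph V) (leaf : X → V) (C : Set X) : Prop :=
  2 ≤ C.ncard ∧ ∃ v : V, 2 ≤ deg G v ∧ C = {x : X | G.Adj (leaf x) v}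

section Machinery

open Finset

variable {X M : Type} [DecidableEq X] {δ : X → X → X → Option M}

/-- Swap first two arguments. -/
lemma sw12 (hs : Symm3 δ) (x y z : X) : δ x y z = δ y x z := (hs x y z).1

/-- Swap last two arguments. -/
lemma sw23 (hs : Symm3 δ) (x y z : X) : δ x y z = δ x z y := (hs x y z).2.1

lemma sw13 (hs : Symm3 δ) (x y z : X) : δ x y z = δ z y x := (hs x y z).2.2

lemma rot1 (hs : Symm3 δ) (x y z : X) : δ x y z = δ y z x :=
  (sw12 hs x y z).trans (sw23 hs y x z)

lemma rot2 (hs : Symm3 δ) (x y z : X) : δ x y z = δ z x y :=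
  (rot1 hs x y z).trans (rot1 hs y z x)

lemma delta_ne_none (hv : VanishCond δ) {x y z : X} (hxy : x ≠ y) (hxz : x ≠ z)
    (hyz : y ≠ z) : δ x y z ≠ none := by
  intro h
  rcases (hv x y z).1 h with h' | h' | h' <;> tauto

lemma delta_perm (hs : Symm3 δ) {x y z x' y' z' : X}
    (h1 : x ≠ y) (h2 : x ≠ z) (h3 : y ≠ z)
    (h4 : x' ≠ y') (h5 : x' ≠ z') (h6 : y' ≠ z')
    (hT : ({x, y, z} : Finset X) = {x', y', z'}) : δ x y z = δ x' y' z' := by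
  have e1 : δ x y z = δ y x z := sw12 hs x y z
  have e2 : δ x y z = δ x z y := sw23 hs x y z
  have e3 : δ x y z = δ z y x := sw13 hs x y z
  have e4 : δ x y z = δ y z x := rot1 hs x y z
  have e5 : δ x y z = δ z x y := rot2 hs x y z
  have hx : x' = x ∨ x' = y ∨ x' = z := by
    have : x' ∈ ({x, y, z} : Finset X) := by rw [hT]; simp
    simpa using this
  have hy : y' = x ∨ y' = y ∨ y' = z := by
    have : y' ∈ ({x, y, z} : Finset X) := by rw [hT]; simp
    simpa using this
  have hz : z' = x ∨ z' = y ∨ z' = z := by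
    have : z' ∈ ({x, y, z} : Finset X) := by rw [hT]; simp
    simpa using this
  rcases hx with rfl | rfl | rfl <;> rcases hy with rfl | rfl | rfl <;>
    rcases hz with rfl | rfl | rfl <;>
    first
      | rfl | exact e1 | exact e2 | exact e3 | exact e4 | exact e5
      | exact absurd rfl h4 | exact absurd rfl h5 | exact absurd rfl h6

lemma valOn_iff (hs : Symm3 δ) {x y z : X} (h1 : x ≠ y) (h2 : x ≠ z) (h3 : y ≠ z)
    (a : Option M) : ValOn δ ({x, y, z} : Finset X) a ↔ δ x y z = a := by
  constructor
  · rintro ⟨x', y', z', d1, d2, d3, hT, he⟩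
    exact (delta_perm hs h1 h2 h3 d1 d2 d3 hT).trans he
  · intro h
    exact ⟨x, y, z, h1, h2, h3, rfl, h⟩

lemma valOn_functional (hs : Symm3 δ) {T : Finset X} {a b : Option M}
    (ha : ValOn δ T a) (hb : ValOn δ T b) : a = b := by
  obtain ⟨x, y, z, d1, d2, d3, rfl, he⟩ := ha
  exact he.symm.trans ((valOn_iff hs d1 d2 d3 b).1 hb)

lemma fne {T T' : Finset X} {w : X} (h1 : w ∈ T) (h2 : w ∉ T') : T ≠ T' :=
  fun h => h2 (h ▸ h1)

lemma card3 {x y z : X} (h1 : x ≠ y) (h2 : x ≠ z) (h3 : y ≠ z) :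
    ({x, y, z} : Finset X).card = 3 := by
  rw [Finset.card_insert_of_notMem (by simp [h1, h2]),
    Finset.card_insert_of_notMem (by simp [h3]), Finset.card_singleton]

end Machinery
section Machinery2

set_option linter.unusedSectionVars false

open Finset

variable {X M : Type} [DecidableEq X] {δ : X → X → X → Option M}

lemma mem_pc3_four {x y z u : X} (h : P4 x y z u) :
    ({x, y, z} : Finset X) ∈ ({x, y, z, u} : Finset X).powersetCard 3 ∧
    ({x, y, u} : Finset X) ∈ ({x, y, z, u} : Finset X).powersetCard 3 ∧
    ({x, z, u} : Finset X) ∈ ({x, y, z, u} : Finset X).powersetCard 3 ∧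
    ({y, z, u} : Finset X) ∈ ({x, y, z, u} : Finset X).powersetCard 3 := by
  obtain ⟨h1, h2, h3, h4, h5, h6⟩ := h
  refine ⟨?_, ?_, ?_, ?_⟩ <;> rw [Finset.mem_powersetCard] <;>
    exact ⟨fun t ht => by simp at ht ⊢; tauto, card3 ‹_› ‹_› ‹_›⟩

lemma cls (hs : Symm3 δ) (h4 : FourPointCond δ) {x y z u : X} (h : P4 x y z u) :
    (δ x y z = δ x y u ∧ δ x y u = δ x z u ∧ δ x z u = δ y z u) ∨
    (δ x y z = δ x y u ∧ δ x z u = δ y z u ∧ δ x y z ≠ δ x z u) ∨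
    (δ x y z = δ x z u ∧ δ x y u = δ y z u ∧ δ x y z ≠ δ x y u) ∨
    (δ x y z = δ y z u ∧ δ x y u = δ x z u ∧ δ x y z ≠ δ x y u) := by
  obtain ⟨hxy, hxz, hxu, hyz, hyu, hzu⟩ := h
  by_cases hall : δ x y z = δ x y u ∧ δ x y u = δ x z u ∧ δ x z u = δ y z u
  · exact Or.inl hall
  -- the value set has exactly two elements
  have hfin : ({δ x y z, δ x y u, δ x z u, δ y z u} : Set (Option M)).Finite := by
    apply Set.Finite.insert; apply Set.Finite.insert; apply Set.Finite.insert
    exact Set.finite_singleton _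
  have hle := (h4 x y z u ⟨hxy, hxz, hxu, hyz, hyu, hzu⟩).1
  have h2 : ({δ x y z, δ x y u, δ x z u, δ y z u} : Set (Option M)).ncard = 2 := by
    refine le_antisymm hle ?_
    have hex : ∃ a b : Option M, a ≠ b ∧
        a ∈ ({δ x y z, δ x y u, δ x z u, δ y z u} : Set (Option M)) ∧
        b ∈ ({δ x y z, δ x y u, δ x z u, δ y z u} : Set (Option M)) := by
      by_cases e1 : δ x y z = δ x y u
      · by_cases e2 : δ x y u = δ x z u
        · refine ⟨δ x z u, δ y z u, fun hc => hall ⟨e1, e2, hc⟩, by simp, by simp⟩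
        · exact ⟨δ x y u, δ x z u, e2, by simp, by simp⟩
      · exact ⟨δ x y z, δ x y u, e1, by simp, by simp⟩
    obtain ⟨a, b, hab, ha, hb⟩ := hex
    have : ({a, b} : Set (Option M)) ⊆ {δ x y z, δ x y u, δ x z u, δ y z u} := by
      intro t ht; rcases ht with rfl | rfl; exacts [ha, hb]
    calc 2 = ({a, b} : Set (Option M)).ncard := (Set.ncard_pair hab).symm
    _ ≤ _ := Set.ncard_le_ncard this hfin
  obtain ⟨va, vb, hab, hca, hcb, hcov⟩ := (h4 x y z u ⟨hxy, hxz, hxu, hyz, hyu, hzu⟩).2 h2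
  obtain ⟨m1, m2, m3, m4⟩ := mem_pc3_four (X := X) ⟨hxy, hxz, hxu, hyz, hyu, hzu⟩
  -- each triple's value is va or vb
  have val1 : δ x y z = va ∨ δ x y z = vb := by
    rcases hcov _ m1 with h | h
    · exact Or.inl ((valOn_iff hs hxy hxz hyz va).1 h)
    · exact Or.inr ((valOn_iff hs hxy hxz hyz vb).1 h)
  have val2 : δ x y u = va ∨ δ x y u = vb := by
    rcases hcov _ m2 with h | h
    · exact Or.inl ((valOn_iff hs hxy hxu hyu va).1 h)
    · exact Or.inr ((valOn_iff hs hxy hxu hyu vb).1 h)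
  have val3 : δ x z u = va ∨ δ x z u = vb := by
    rcases hcov _ m3 with h | h
    · exact Or.inl ((valOn_iff hs hxz hxu hzu va).1 h)
    · exact Or.inr ((valOn_iff hs hxz hxu hzu vb).1 h)
  have val4 : δ y z u = va ∨ δ y z u = vb := by
    rcases hcov _ m4 with h | h
    · exact Or.inl ((valOn_iff hs hyz hyu hzu va).1 h)
    · exact Or.inr ((valOn_iff hs hyz hyu hzu vb).1 h)
  -- no three triples share a value
  have n12 : ({x, y, z} : Finset X) ≠ {x, y, u} := fne (w := z) (by simp) (by simp [hxz.symm, hyz.symm, hzu])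
  have n13 : ({x, y, z} : Finset X) ≠ {x, z, u} := fne (w := y) (by simp) (by simp [hxy.symm, hyz, hyu])
  have n14 : ({x, y, z} : Finset X) ≠ {y, z, u} := fne (w := x) (by simp) (by simp [hxy, hxz, hxu])
  have n23 : ({x, y, u} : Finset X) ≠ {x, z, u} := fne (w := y) (by simp) (by simp [hxy.symm, hyz, hyu])
  have n24 : ({x, y, u} : Finset X) ≠ {y, z, u} := fne (w := x) (by simp) (by simp [hxy, hxz, hxu])
  have n34 : ({x, z, u} : Finset X) ≠ {y, z, u} := fne (w := x) (by simp) (by simp [hxy, hxz, hxu])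
  have noThree : ∀ (T1 T2 T3 : Finset X) (c : Option M), T1 ≠ T2 → T1 ≠ T3 → T2 ≠ T3 →
      T1 ∈ ({x, y, z, u} : Finset X).powersetCard 3 →
      T2 ∈ ({x, y, z, u} : Finset X).powersetCard 3 →
      T3 ∈ ({x, y, z, u} : Finset X).powersetCard 3 →
      (c = va ∨ c = vb) →
      ValOn δ T1 c → ValOn δ T2 c → ValOn δ T3 c → False := by
    intro T1 T2 T3 c d12 d13 d23 i1 i2 i3 hc v1 v2 v3
    have hsub : ({T1, T2, T3} : Set (Finset X)) ⊆
        {T : Finset X | T ∈ ({x, y, z, u} : Finset X).powersetCard 3 ∧ ValOn δ T c} := by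
      intro t ht
      rcases ht with rfl | rfl | rfl
      exacts [⟨i1, v1⟩, ⟨i2, v2⟩, ⟨i3, v3⟩]
    have hfin2 : {T : Finset X | T ∈ ({x, y, z, u} : Finset X).powersetCard 3 ∧ ValOn δ T c}.Finite :=
      Set.Finite.subset (Finset.finite_toSet _) (fun t ht => ht.1)
    have h3 : ({T1, T2, T3} : Set (Finset X)).ncard = 3 :=
      Set.ncard_eq_three.2 ⟨T1, T2, T3, d12, d13, d23, rfl⟩
    have hle3 : 3 ≤ 2 := by
      rcases hc with rfl | rfl
      · calc 3 = _ := h3.symm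
        _ ≤ _ := Set.ncard_le_ncard hsub hfin2
        _ = 2 := hca
      · calc 3 = _ := h3.symm
        _ ≤ _ := Set.ncard_le_ncard hsub hfin2
        _ = 2 := hcb
    omega
  -- value of a triple as ValOn
  have w1 : ∀ c, δ x y z = c → ValOn δ ({x, y, z} : Finset X) c :=
    fun c hc => (valOn_iff hs hxy hxz hyz c).2 hc
  have w2 : ∀ c, δ x y u = c → ValOn δ ({x, y, u} : Finset X) c :=
    fun c hc => (valOn_iff hs hxy hxu hyu c).2 hc
  have w3 : ∀ c, δ x z u = c → ValOn δ ({x, z, u} : Finset X) c :=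
    fun c hc => (valOn_iff hs hxz hxu hzu c).2 hc
  have w4 : ∀ c, δ y z u = c → ValOn δ ({y, z, u} : Finset X) c :=
    fun c hc => (valOn_iff hs hyz hyu hzu c).2 hc
  -- main case analysis
  by_cases e12 : δ x y z = δ x y u
  · -- then the other two share the other value
    have h3ne : δ x z u ≠ δ x y z := by
      intro he
      exact noThree _ _ _ (δ x y z) n12 n13 n23 m1 m2 m3 (val1)
        (w1 _ rfl) (w2 _ e12.symm) (w3 _ he)
    have h4ne : δ y z u ≠ δ x y z := by
      intro he
      exact noThree _ _ _ (δ x y z) n12 n14 n24 m1 m2 m4 (val1)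
        (w1 _ rfl) (w2 _ e12.symm) (w4 _ he)
    have e34 : δ x z u = δ y z u := by
      rcases val1 with hv1 | hv1
      · rcases val3 with hv3 | hv3
        · exact absurd (hv3.trans hv1.symm) h3ne
        · rcases val4 with hv4 | hv4
          · exact absurd (hv4.trans hv1.symm) h4ne
          · exact hv3.trans hv4.symm
      · rcases val3 with hv3 | hv3
        · rcases val4 with hv4 | hv4
          · exact hv3.trans hv4.symm
          · exact absurd (hv4.trans hv1.symm) h4ne
        · exact absurd (hv3.trans hv1.symm) h3ne
    exact Or.inr (Or.inl ⟨e12, e34, fun he => h3ne he.symm⟩)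
  · by_cases e13 : δ x y z = δ x z u
    · have h2ne : δ x y u ≠ δ x y z := fun he => e12 he.symm
      have h4ne : δ y z u ≠ δ x y z := by
        intro he
        exact noThree _ _ _ (δ x y z) n13 n14 n34 m1 m3 m4 (val1)
          (w1 _ rfl) (w3 _ e13.symm) (w4 _ he)
      have e24 : δ x y u = δ y z u := by
        rcases val1 with hv1 | hv1
        · rcases val2 with hv2 | hv2
          · exact absurd (hv2.trans hv1.symm) h2ne
          · rcases val4 with hv4 | hv4
            · exact absurd (hv4.trans hv1.symm) h4ne
            · exact hv2.trans hv4.symm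
        · rcases val2 with hv2 | hv2
          · rcases val4 with hv4 | hv4
            · exact hv2.trans hv4.symm
            · exact absurd (hv4.trans hv1.symm) h4ne
          · exact absurd (hv2.trans hv1.symm) h2ne
      exact Or.inr (Or.inr (Or.inl ⟨e13, e24, e12⟩))
    · -- δ x y z pairs with δ y z u
      have e23 : δ x y u = δ x z u := by
        rcases val1 with hv1 | hv1
        · rcases val2 with hv2 | hv2
          · exact absurd (hv2.trans hv1.symm) (fun he => e12 he.symm)
          · rcases val3 with hv3 | hv3
            · exact absurd (hv3.trans hv1.symm) (fun he => e13 he.symm)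
            · exact hv2.trans hv3.symm
        · rcases val2 with hv2 | hv2
          · rcases val3 with hv3 | hv3
            · exact hv2.trans hv3.symm
            · exact absurd (hv3.trans hv1.symm) (fun he => e13 he.symm)
          · exact absurd (hv2.trans hv1.symm) (fun he => e12 he.symm)
      have e14 : δ x y z = δ y z u := by
        by_contra e14
        exact noThree _ _ _ (δ x y u) n23 n24 n34 m2 m3 m4 (val2)
          (w2 _ rfl) (w3 _ e23.symm)
          (w4 _ (by
            rcases val1 with hv1 | hv1 <;> rcases val2 with hv2 | hv2 <;>
              rcases val4 with hv4 | hv4 <;>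
              first
                | exact hv4.trans hv2.symm
                | exact absurd (hv1.trans hv2.symm) e12
                | exact absurd (hv1.trans hv4.symm) e14))
      exact Or.inr (Or.inr (Or.inr ⟨e14, e23, e12⟩))

lemma eq4 (hs : Symm3 δ) (h4 : FourPointCond δ) {x y z u : X} (h : P4 x y z u)
    (he : δ x y z = δ x y u) : δ x z u = δ y z u := by
  rcases cls hs h4 h with ⟨_, _, h3⟩ | ⟨_, h2, _⟩ | ⟨_, _, hne⟩ | ⟨_, _, hne⟩
  exacts [h3, h2, absurd he hne, absurd he hne]

lemma solve4 (hs : Symm3 δ) (h4 : FourPointCond δ) {x y z u : X} (h : P4 x y z u)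
    (hne : δ x y z ≠ δ x y u) :
    (δ x z u = δ x y z ∧ δ y z u = δ x y u) ∨
    (δ x z u = δ x y u ∧ δ y z u = δ x y z) := by
  rcases cls hs h4 h with ⟨h1, _, _⟩ | ⟨h1, _, _⟩ | ⟨h1, h2, _⟩ | ⟨h1, h2, _⟩
  exacts [absurd h1 hne, absurd h1 hne, Or.inl ⟨h1.symm, h2.symm⟩,
    Or.inr ⟨h2.symm, h1.symm⟩]

end Machinery2
section Machinery3

set_option linter.unusedSectionVars false

open Finset

variable {X M : Type} [DecidableEq X] {δ : X → X → X → Option M}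

lemma sum_pc_insert (f : Finset X → ℕ) {a : X} {s : Finset X} (ha : a ∉ s) (n : ℕ) :
    ∑ T ∈ (insert a s).powersetCard (n + 1), f T =
      (∑ T ∈ s.powersetCard (n + 1), f T) + ∑ T ∈ s.powersetCard n, f (insert a T) := by
  rw [Finset.powersetCard_succ_insert ha]
  rw [Finset.sum_union]
  · congr 1
    rw [Finset.sum_image]
    intro T1 h1 T2 h2 he
    have ha1 : a ∉ T1 := fun hc => ha ((Finset.mem_powersetCard.1 h1).1 hc)
    have ha2 : a ∉ T2 := fun hc => ha ((Finset.mem_powersetCard.1 h2).1 hc)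
    rw [← Finset.erase_insert ha1, ← Finset.erase_insert ha2, he]
  · rw [Finset.disjoint_left]
    intro T hT hT'
    obtain ⟨T', hT', rfl⟩ := Finset.mem_image.1 hT'
    have : a ∈ insert a T' := Finset.mem_insert_self a T'
    exact (fun hc => ha ((Finset.mem_powersetCard.1 hT).1 hc)) this

lemma sum_pc3_five (f : Finset X → ℕ) {a b c d e : X}
    (hab : a ≠ b) (hac : a ≠ c) (had : a ≠ d) (hae : a ≠ e)
    (hbc : b ≠ c) (hbd : b ≠ d) (hbe : b ≠ e)
    (hcd : c ≠ d) (hce : c ≠ e) (hde : d ≠ e) :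
    ∑ T ∈ ({a, b, c, d, e} : Finset X).powersetCard 3, f T =
      f {a, b, c} + f {a, b, d} + f {a, b, e} + f {a, c, d} + f {a, c, e} +
      f {a, d, e} + f {b, c, d} + f {b, c, e} + f {b, d, e} + f {c, d, e} := by
  have hbs : b ∉ ({c, d, e} : Finset X) := by simp [hbc, hbd, hbe]
  have has : a ∉ ({b, c, d, e} : Finset X) := by simp [hab, hac, had, hae]
  have hcs : c ∉ ({d, e} : Finset X) := by simp [hcd, hce]
  have hds : d ∉ ({e} : Finset X) := by simp [hde]
  have pc3_cde : ({c, d, e} : Finset X).powersetCard 3 = {({c, d, e} : Finset X)} := by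
    have : ({c, d, e} : Finset X).card = 3 := card3 hcd hce hde
    rw [← this, Finset.powersetCard_self]
  have pc2_de : ({d, e} : Finset X).powersetCard 2 = {({d, e} : Finset X)} := by
    have : ({d, e} : Finset X).card = 2 := by
      rw [Finset.card_insert_of_notMem (by simp [hde]), Finset.card_singleton]
    rw [← this, Finset.powersetCard_self]
  have pc1_e : ({e} : Finset X).powersetCard 1 = {({e} : Finset X)} := by
    have : ({e} : Finset X).card = 1 := Finset.card_singleton e
    rw [← this, Finset.powersetCard_self]
  have pc1_de : ∀ g : Finset X → ℕ, ∑ T ∈ ({d, e} : Finset X).powersetCard 1, g T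
      = g {d} + g {e} := by
    intro g
    rw [show ({d, e} : Finset X) = insert d {e} from rfl, sum_pc_insert g hds 0,
      pc1_e, Finset.powersetCard_zero]
    simp [Nat.add_comm]
  have pc1_cde : ∀ g : Finset X → ℕ, ∑ T ∈ ({c, d, e} : Finset X).powersetCard 1, g T
      = g {c} + g {d} + g {e} := by
    intro g
    rw [show ({c, d, e} : Finset X) = insert c {d, e} from rfl, sum_pc_insert g hcs 0,
      pc1_de, Finset.powersetCard_zero]
    simp
    ring
  have pc2_cde : ∀ g : Finset X → ℕ, ∑ T ∈ ({c, d, e} : Finset X).powersetCard 2, g T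
      = g {c, d} + g {c, e} + g {d, e} := by
    intro g
    rw [show ({c, d, e} : Finset X) = insert c {d, e} from rfl, sum_pc_insert g hcs 1,
      pc2_de, pc1_de]
    simp
    ring
  have pc3_bcde : ∀ g : Finset X → ℕ, ∑ T ∈ ({b, c, d, e} : Finset X).powersetCard 3, g T
      = g {b, c, d} + g {b, c, e} + g {b, d, e} + g {c, d, e} := by
    intro g
    rw [show ({b, c, d, e} : Finset X) = insert b {c, d, e} from rfl, sum_pc_insert g hbs 2,
      pc3_cde, pc2_cde]
    simp
    ring
  have pc2_bcde : ∀ g : Finset X → ℕ, ∑ T ∈ ({b, c, d, e} : Finset X).powersetCard 2, g T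
      = g {b, c} + g {b, d} + g {b, e} + g {c, d} + g {c, e} + g {d, e} := by
    intro g
    rw [show ({b, c, d, e} : Finset X) = insert b {c, d, e} from rfl, sum_pc_insert g hbs 1,
      pc2_cde, pc1_cde (fun T => g (insert b T))]
    ring
  rw [show ({a, b, c, d, e} : Finset X) = insert a {b, c, d, e} from rfl,
    sum_pc_insert f has 2, pc3_bcde, pc2_bcde]
  ring

end Machinery3
section Machinery4

set_option linter.unusedSectionVars false

open Finset Classical in
/-- Master lemma: a 5-cycle pattern of values contradicts the five-point condition.
The `v`-triples are the complements of the edges of the 5-cycle a-b-c-d-e-a. -/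
lemma five_cycle_contra {X M : Type} [DecidableEq X] {δ : X → X → X → Option M}
    (hs : Symm3 δ) (h5 : FivePointCond δ) {a b c d e : X}
    (hab : a ≠ b) (hac : a ≠ c) (had : a ≠ d) (hae : a ≠ e)
    (hbc : b ≠ c) (hbd : b ≠ d) (hbe : b ≠ e)
    (hcd : c ≠ d) (hce : c ≠ e) (hde : d ≠ e)
    {v w : Option M} (hvw : v ≠ w)
    (t1 : δ a b c = v) (t2 : δ a b e = v) (t3 : δ a d e = v)
    (t4 : δ b c d = v) (t5 : δ c d e = v)
    (g1 : δ a b d = w) (g2 : δ a c d = w) (g3 : δ a c e = w)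
    (g4 : δ b c e = w) (g5 : δ b d e = w) : False := by
  set S : Finset X := {a, b, c, d, e} with hS
  have hcard : S.card = 5 := by
    rw [hS, Finset.card_insert_of_notMem (by simp [hab, hac, had, hae]),
      Finset.card_insert_of_notMem (by simp [hbc, hbd, hbe]),
      Finset.card_insert_of_notMem (by simp [hcd, hce]),
      Finset.card_insert_of_notMem (by simp [hde]), Finset.card_singleton]
  -- counting the triples with a given value
  have key : ∀ c' : Option M, {T : Finset X | T ∈ S.powersetCard 3 ∧ ValOn δ T c'}.ncard =
      (if δ a b c = c' then 1 else 0) + (if δ a b d = c' then 1 else 0) +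
      (if δ a b e = c' then 1 else 0) + (if δ a c d = c' then 1 else 0) +
      (if δ a c e = c' then 1 else 0) + (if δ a d e = c' then 1 else 0) +
      (if δ b c d = c' then 1 else 0) + (if δ b c e = c' then 1 else 0) +
      (if δ b d e = c' then 1 else 0) + (if δ c d e = c' then 1 else 0) := by
    intro c'
    have hset : {T : Finset X | T ∈ S.powersetCard 3 ∧ ValOn δ T c'} =
        ↑((S.powersetCard 3).filter (fun T => ValOn δ T c')) := by
      ext T; simp [Finset.mem_filter]
    rw [hset, Set.ncard_coe_finset, Finset.card_filter, hS,
      sum_pc3_five _ hab hac had hae hbc hbd hbe hcd hce hde]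
    rw [if_congr (valOn_iff hs hab hac hbc c') rfl rfl,
      if_congr (valOn_iff hs hab had hbd c') rfl rfl,
      if_congr (valOn_iff hs hab hae hbe c') rfl rfl,
      if_congr (valOn_iff hs hac had hcd c') rfl rfl,
      if_congr (valOn_iff hs hac hae hce c') rfl rfl,
      if_congr (valOn_iff hs had hae hde c') rfl rfl,
      if_congr (valOn_iff hs hbc hbd hcd c') rfl rfl,
      if_congr (valOn_iff hs hbc hbe hce c') rfl rfl,
      if_congr (valOn_iff hs hbd hbe hde c') rfl rfl,
      if_congr (valOn_iff hs hcd hce hde c') rfl rfl]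
  have hwv : w ≠ v := hvw.symm
  have cntv : {T : Finset X | T ∈ S.powersetCard 3 ∧ ValOn δ T v}.ncard = 5 := by
    rw [key v, t1, t2, t3, t4, t5, g1, g2, g3, g4, g5]
    simp [hwv]
  have cntw : {T : Finset X | T ∈ S.powersetCard 3 ∧ ValOn δ T w}.ncard = 5 := by
    rw [key w, t1, t2, t3, t4, t5, g1, g2, g3, g4, g5]
    simp [hvw]
  -- coverage via cardinality
  have hcov : ∀ T ∈ S.powersetCard 3, ValOn δ T v ∨ ValOn δ T w := by
    set A := (S.powersetCard 3).filter (fun T => ValOn δ T v) with hA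
    set B := (S.powersetCard 3).filter (fun T => ValOn δ T w) with hB
    have cA : A.card = 5 := by
      have : {T : Finset X | T ∈ S.powersetCard 3 ∧ ValOn δ T v} = ↑A := by
        ext T; simp [hA, Finset.mem_filter]
      rw [← Set.ncard_coe_finset, ← this, cntv]
    have cB : B.card = 5 := by
      have : {T : Finset X | T ∈ S.powersetCard 3 ∧ ValOn δ T w} = ↑B := by
        ext T; simp [hB, Finset.mem_filter]
      rw [← Set.ncard_coe_finset, ← this, cntw]
    have hdisj : Disjoint A B := by
      rw [Finset.disjoint_left]
      intro T hTA hTB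
      exact hvw (valOn_functional hs (Finset.mem_filter.1 hTA).2 (Finset.mem_filter.1 hTB).2)
    have hsub : A ∪ B ⊆ S.powersetCard 3 :=
      Finset.union_subset (Finset.filter_subset _ _) (Finset.filter_subset _ _)
    have hcards : (S.powersetCard 3).card = 10 := by
      rw [Finset.card_powersetCard, hcard]
      decide
    have : A ∪ B = S.powersetCard 3 := by
      apply Finset.eq_of_subset_of_card_le hsub
      rw [hcards, Finset.card_union_of_disjoint hdisj, cA, cB]
    intro T hT
    rw [← this] at hT
    rcases Finset.mem_union.1 hT with h | h
    · exact Or.inl (Finset.mem_filter.1 h).2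
    · exact Or.inr (Finset.mem_filter.1 h).2
  exact h5 S hcard ⟨v, w, hvw, cntv, cntw, hcov⟩

end Machinery4
section Machinery5

set_option linter.unusedSectionVars false

variable {X M : Type} [DecidableEq X] {δ : X → X → X → Option M}

lemma distinct_of_ne_none (hv : VanishCond δ) {x y z : X} (h : δ x y z ≠ none) :
    x ≠ y ∧ y ≠ z ∧ x ≠ z :=
  ⟨fun he => h ((hv x y z).2 (Or.inl he)),
   fun he => h ((hv x y z).2 (Or.inr (Or.inl he))),
   fun he => h ((hv x y z).2 (Or.inr (Or.inr he)))⟩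

/-- A resolver point is distinct from all four quartet points. -/
lemma resolver_ne (hv : VanishCond δ) {x y z u e : X} (h : P4 x y z u)
    (h1 : δ x y e = δ x y z) (h2 : δ z u e = δ x y z) :
    e ≠ x ∧ e ≠ y ∧ e ≠ z ∧ e ≠ u := by
  obtain ⟨hxy, hxz, hxu, hyz, hyu, hzu⟩ := h
  have hnn : δ x y z ≠ none := delta_ne_none hv hxy hxz hyz
  have d1 := distinct_of_ne_none hv (h1 ▸ hnn)
  have d2 := distinct_of_ne_none hv (h2 ▸ hnn)
  exact ⟨d1.2.2.symm, d1.2.1.symm, d2.2.2.symm, d2.2.1.symm⟩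

lemma P4.swap12 {x y z u : X} (h : P4 x y z u) : P4 y x z u :=
  ⟨h.1.symm, h.2.2.2.1, h.2.2.2.2.1, h.2.1, h.2.2.1, h.2.2.2.2.2⟩

lemma P4.swap34 {x y z u : X} (h : P4 x y z u) : P4 x y u z :=
  ⟨h.1, h.2.2.1, h.2.1, h.2.2.2.2.1, h.2.2.2.1, h.2.2.2.2.2.symm⟩

lemma P4.swapP {x y z u : X} (h : P4 x y z u) : P4 z u x y :=
  ⟨h.2.2.2.2.2, h.2.1.symm, h.2.2.2.1.symm, h.2.2.1.symm, h.2.2.2.2.1.symm, h.1⟩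

lemma gen_swap12 (hs : Symm3 δ) {x y z u : X} (h : Generates δ x y z u) :
    Generates δ y x z u := by
  obtain ⟨hP, hA | hB⟩ := h
  · obtain ⟨a1, a2, a3⟩ := hA
    refine ⟨hP.swap12, Or.inl ?_⟩
    rw [sw12 hs y x z, sw12 hs y x u]
    exact ⟨a1.symm, fun h => a2 (a1.symm.trans h), a3⟩
  · obtain ⟨b1, b2, b3, e, c1, c2, c3, c4, c5, c6⟩ := hB
    refine ⟨hP.swap12, Or.inr ?_⟩
    rw [sw12 hs y x z, sw12 hs y x u]
    refine ⟨b1, b2.trans b3, b3.symm, e, ?_, c2, ?_, ?_, c5.symm, c4.symm⟩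
    · rw [sw12 hs y x e]; exact c1
    · intro h
      exact c3 ((c4.trans (c5.trans c6)).trans h)
    · exact (c4.trans (c5.trans c6)).symm.trans (c4.trans c5)

lemma gen_swap34 (hs : Symm3 δ) {x y z u : X} (h : Generates δ x y z u) :
    Generates δ x y u z := by
  obtain ⟨hP, hA | hB⟩ := h
  · obtain ⟨a1, a2, a3⟩ := hA
    refine ⟨hP.swap34, Or.inl ?_⟩
    rw [sw23 hs x u z, sw23 hs y u z]
    exact ⟨a1, fun h => a2 (h.trans a3.symm), a3.symm⟩
  · obtain ⟨b1, b2, b3, e, c1, c2, c3, c4, c5, c6⟩ := hB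
    refine ⟨hP.swap34, Or.inr ?_⟩
    rw [sw23 hs x u z, sw23 hs y u z]
    refine ⟨b1.symm, b1.trans b2, b3, e, c1.trans b1, ?_, ?_, c4.symm,
      c4.trans (c5.trans c6), c6.symm⟩
    · rw [sw12 hs u z e]; exact c2.trans b1
    · intro h
      exact c3 (c4.trans (h.trans b1.symm))

lemma gen_swapP (hs : Symm3 δ) {x y z u : X} (h : Generates δ x y z u) :
    Generates δ z u x y := by
  obtain ⟨hP, hA | hB⟩ := h
  · obtain ⟨a1, a2, a3⟩ := hA
    refine ⟨hP.swapP, Or.inl ?_⟩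
    rw [show δ z x y = δ x y z from (rot2 hs x y z).symm,
      show δ u x y = δ x y u from (rot2 hs x y u).symm,
      show δ z u x = δ x z u from (rot1 hs x z u).symm,
      show δ z u y = δ y z u from (rot1 hs y z u).symm]
    refine ⟨a3, ?_, a1⟩
    intro h
    exact a2 (a1.symm.trans (h.symm.trans a3.symm))
  · obtain ⟨b1, b2, b3, e, c1, c2, c3, c4, c5, c6⟩ := hB
    refine ⟨hP.swapP, Or.inr ?_⟩
    rw [show δ z u x = δ x z u from (rot1 hs x z u).symm,
      show δ z u y = δ y z u from (rot1 hs y z u).symm,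
      show δ z x y = δ x y z from (rot2 hs x y z).symm,
      show δ u x y = δ x y u from (rot2 hs x y u).symm]
    refine ⟨b3, b3.symm.trans (b1.trans b2).symm, b1, e, ?_, ?_, ?_, ?_, ?_, ?_⟩
    · rw [show δ z u e = δ z u e from rfl]; exact c2.trans (b1.trans b2)
    · exact c1.trans (b1.trans b2)
    · rw [show δ z y e = δ y z e from sw12 hs z y e]
      intro h
      exact c3 (c4.trans (c5.trans (h.trans (b1.trans b2).symm)))
    · rw [show δ z y e = δ y z e from sw12 hs z y e,
        show δ z x e = δ x z e from sw12 hs z x e]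
      exact c5.symm
    · rw [show δ z x e = δ x z e from sw12 hs z x e,
        show δ u x e = δ x u e from sw12 hs u x e]
      exact c4.symm
    · rw [show δ u x e = δ x u e from sw12 hs u x e,
        show δ u y e = δ y u e from sw12 hs u y e]
      exact c4.trans (c5.trans c6)

lemma genQS (hs : Symm3 δ) : IsQuartetSystem (Generates δ) := by
  intro a b c d
  refine ⟨fun h => h.1, ?_, ?_, ?_⟩
  · exact ⟨gen_swap12 hs, gen_swap12 hs⟩
  · exact ⟨gen_swap34 hs, gen_swap34 hs⟩
  · exact ⟨gen_swapP hs, gen_swapP hs⟩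

end Machinery5
section ThinSection

set_option linter.unusedSectionVars false

variable {X M : Type} [DecidableEq X] {δ : X → X → X → Option M}

lemma thin_core (hs : Symm3 δ) (hv : VanishCond δ) (h4 : FourPointCond δ)
    (h5 : FivePointCond δ) {a b c d : X} :
    ¬(Generates δ a b c d ∧ Generates δ a c b d) := by
  rintro ⟨⟨hP, hA1 | hB1⟩, ⟨hP', hA2 | hB2⟩⟩
  · -- A & A
    obtain ⟨a1, a2, a3⟩ := hA1
    obtain ⟨a1', a2', a3'⟩ := hA2
    rw [sw23 hs a c b] at a3'
    exact a2 (a1.symm.trans a3'.symm)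
  · -- A & B
    obtain ⟨a1, a2, a3⟩ := hA1
    obtain ⟨b1', b2', b3', _⟩ := hB2
    rw [sw23 hs a c b] at b1'
    exact a2 (a1.symm.trans b1'.symm)
  · -- B & A
    obtain ⟨b1, b2, b3, _⟩ := hB1
    obtain ⟨a1', a2', a3'⟩ := hA2
    rw [sw12 hs c b d, sw23 hs a c b] at a2'
    exact a2' (b1.trans (b2.trans b3)).symm
  · -- B & B : the hard case
    obtain ⟨hab, hac, had, hbc, hbd, hcd⟩ := hP
    obtain ⟨b1, b2, b3, e, c1, c2, c3, c4, c5, c6⟩ := hB1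
    obtain ⟨b1', b2', b3', f, c1', c2', c3', c4', c5', c6'⟩ := hB2
    -- distinctness of e and f from the quartet
    obtain ⟨hea, heb, hec, hed⟩ := resolver_ne hv ⟨hab, hac, had, hbc, hbd, hcd⟩ c1 c2
    obtain ⟨hfa, hfc, hfb, hfd⟩ := resolver_ne hv hP' c1' c2'
    -- normalize the B2 data
    rw [sw23 hs a c b] at b1' c1' c2' c3'
    rw [sw12 hs c b f] at c5' c6'
    -- common value facts (value A := δ a b c)
    have habd : δ a b d = δ a b c := b1.symm
    have hacd : δ a c d = δ a b c := (b1.trans b2).symm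
    have hbcd : δ b c d = δ a b c := (b1.trans (b2.trans b3)).symm
    have habe : δ a b e = δ a b c := c1
    have hcde : δ c d e = δ a b c := c2
    -- value B := δ a d e
    have hBA : δ a d e ≠ δ a b c := c3
    have hace : δ a c e = δ a d e := c4.symm
    have hbce : δ b c e = δ a d e := (c4.trans c5).symm
    have hbde : δ b d e = δ a d e := (c4.trans (c5.trans c6)).symm
    -- value G := δ a d f
    have hacf : δ a c f = δ a b c := c1'
    have hbdf : δ b d f = δ a b c := c2'
    have hGA : δ a d f ≠ δ a b c := c3'
    have habf : δ a b f = δ a d f := c4'.symm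
    have hbcf : δ b c f = δ a d f := (c4'.trans c5').symm
    have hcdf : δ c d f = δ a d f := (c4'.trans (c5'.trans c6')).symm
    have hef : e ≠ f := by
      intro h
      rw [← h] at habf
      exact hBA (habf.symm.trans habe)
    by_cases hBG : δ a d e = δ a d f
    · -- hard subcase: use the five point condition
      have P4abef : P4 a b e f := ⟨hab, hea.symm, hfa.symm, heb.symm, hfb.symm, hef⟩
      have hne1 : δ a b e ≠ δ a b f := by
        rw [habe, habf]; exact fun h => hGA h.symm
      have P4cdef : P4 c d e f := ⟨hcd, hec.symm, hfc.symm, hed.symm, hfd.symm, hef⟩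
      have hne2 : δ c d e ≠ δ c d f := by
        rw [hcde, hcdf]; exact fun h => hGA h.symm
      rcases solve4 hs h4 P4abef hne1 with ⟨k1, k2⟩ | ⟨k1, k2⟩
      · -- δaef = A, δbef = G
        rw [habe] at k1
        rw [habf] at k2
        -- δcef = G from {b,c,e,f}
        have hcef : δ c e f = δ a d f := by
          have h' := eq4 hs h4
            (⟨hbc, heb.symm, hfb.symm, hec.symm, hfc.symm, hef⟩ : P4 b c e f)
            (by rw [hbce, hbcf, hBG])
          exact h'.symm.trans k2
        -- δdef = A from {c,d,e,f}
        have hdef : δ d e f = δ a b c := by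
          rcases solve4 hs h4 P4cdef hne2 with ⟨m1, m2⟩ | ⟨m1, m2⟩
          · rw [hcde] at m1
            exact absurd (hcef.symm.trans m1) hGA
          · rw [hcde] at m2; exact m2
        -- five-cycle on (b, a, e, f, d)
        exact five_cycle_contra hs h5 hab.symm heb.symm hfb.symm hbd hea.symm hfa.symm had
          hef hed hfd (v := δ a b c) (w := δ a d f)
          (fun h => hGA h.symm)
          (by rw [sw12 hs b a e]; exact habe)
          (by rw [sw12 hs b a d]; exact habd)
          (by rw [sw23 hs b f d]; exact hbdf)
          k1
          (by rw [show δ e f d = δ d e f from (rot1 hs d e f).symm]; exact hdef)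
          (by rw [sw12 hs b a f]; exact habf)
          k2
          (by rw [sw23 hs b e d]; rw [hbde, hBG])
          (by rw [sw23 hs a e d]; exact hBG)
          (by rw [sw23 hs a f d])
      · -- δaef = G, δbef = A
        rw [habe] at k2
        rw [habf] at k1
        -- δdef = G from {a,d,e,f}
        have hdef : δ d e f = δ a d f := by
          have h' := eq4 hs h4
            (⟨had, hea.symm, hfa.symm, hed.symm, hfd.symm, hef⟩ : P4 a d e f)
            (by rw [hBG])
          exact h'.symm.trans k1
        -- δcef = A from {c,d,e,f}
        have hcef : δ c e f = δ a b c := by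
          rcases solve4 hs h4 P4cdef hne2 with ⟨m1, m2⟩ | ⟨m1, m2⟩
          · rw [hcde] at m1; exact m1
          · rw [hcde] at m2
            exact absurd (hdef.symm.trans m2) hGA
        -- five-cycle on (a, b, e, f, c)
        exact five_cycle_contra hs h5 hab hea.symm hfa.symm hac heb.symm hfb.symm hbc
          hef hec hfc (v := δ a b c) (w := δ a d f)
          (fun h => hGA h.symm)
          habe rfl
          (by rw [sw23 hs a f c]; exact hacf)
          k2
          (by rw [show δ e f c = δ c e f from (rot1 hs c e f).symm]; exact hcef)
          habf
          k1
          (by rw [sw23 hs a e c]; rw [hace, hBG])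
          (by rw [sw23 hs b e c]; rw [hbce, hBG])
          (by rw [sw23 hs b f c]; exact hbcf)
    · -- B ≠ G : direct contradiction via four point condition
      have P4acef : P4 a c e f := ⟨hac, hea.symm, hfa.symm, hec.symm, hfc.symm, hef⟩
      have hne3 : δ a c e ≠ δ a c f := by rw [hace, hacf]; exact hBA
      have hkey : δ c e f = δ a d e := by
        rcases solve4 hs h4 P4acef hne3 with ⟨m1, m2⟩ | ⟨m1, m2⟩
        · -- δaef = B impossible
          rw [hace] at m1
          exfalso
          have P4abef : P4 a b e f := ⟨hab, hea.symm, hfa.symm, heb.symm, hfb.symm, hef⟩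
          have hne1 : δ a b e ≠ δ a b f := by
            rw [habe, habf]; exact fun h => hGA h.symm
          rcases solve4 hs h4 P4abef hne1 with ⟨k1, _⟩ | ⟨k1, _⟩
          · rw [habe] at k1; exact hBA (m1.symm.trans k1)
          · rw [habf] at k1; exact hBG (m1.symm.trans k1)
        · rw [hace] at m2
          exact m2
      -- now {c,d,e,f} has three values
      have P4cdef : P4 c d e f := ⟨hcd, hec.symm, hfc.symm, hed.symm, hfd.symm, hef⟩
      have hne2 : δ c d e ≠ δ c d f := by
        rw [hcde, hcdf]; exact fun h => hGA h.symm
      rcases solve4 hs h4 P4cdef hne2 with ⟨m1, _⟩ | ⟨m1, _⟩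
      · rw [hcde] at m1; exact hBA (hkey.symm.trans m1)
      · rw [hcdf] at m1; exact hBG (hkey.symm.trans m1)

lemma thin_main (hs : Symm3 δ) (hv : VanishCond δ) (h4 : FourPointCond δ)
    (h5 : FivePointCond δ) : Thin (Generates δ) := by
  intro a b c d _
  refine ⟨fun ⟨q1, q2⟩ => thin_core hs hv h4 h5 ⟨q1, q2⟩, ?_, ?_⟩
  · rintro ⟨q1, q2⟩
    exact thin_core hs hv h4 h5 ⟨gen_swap34 hs q1, q2⟩
  · rintro ⟨q1, q2⟩
    exact thin_core hs hv h4 h5 ⟨gen_swap34 hs q1, gen_swap34 hs q2⟩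

end ThinSection
section TransSection

set_option linter.unusedSectionVars false

variable {X M : Type} [DecidableEq X] {δ : X → X → X → Option M}

lemma trans_main (hs : Symm3 δ) (hv : VanishCond δ) (h4 : FourPointCond δ)
    (h5 : FivePointCond δ) : TransitiveQ (Generates δ) := by
  rintro a b c d e ⟨⟨hab, hac, had, hbc, hbd, hcd⟩, hae, hbe, hce, hde⟩ q1 q2
  have P4abcd : P4 a b c d := ⟨hab, hac, had, hbc, hbd, hcd⟩
  have P4abce : P4 a b c e := ⟨hab, hac, hae, hbc, hbe, hce⟩
  have P4abde : P4 a b d e := ⟨hab, had, hae, hbd, hbe, hde⟩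
  have P4acde : P4 a c d e := ⟨hac, had, hae, hcd, hce, hde⟩
  obtain ⟨_, hA1 | hB1⟩ := q1 <;> obtain ⟨_, hA2 | hB2⟩ := q2
  · -- Case 1 : A, A
    obtain ⟨a1, a2, a3⟩ := hA1
    obtain ⟨a1', a2', a3'⟩ := hA2
    have habcd : δ a b c = δ a b d := a3.trans a3'.symm
    have h34 : δ a c d = δ b c d := eq4 hs h4 P4abcd habcd
    by_cases hQ : δ a c d = δ a b c
    · have hq : δ a c e ≠ δ a b c := fun h => a2 (a1.symm.trans h)
      have hr : δ a d e ≠ δ a b c := fun h => a2' (a1'.symm.trans (h.trans habcd))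
      have hne : δ a c d ≠ δ a c e := by rw [hQ]; exact fun h => hq h.symm
      rcases solve4 hs h4 P4acde hne with ⟨m1, m2⟩ | ⟨m1, m2⟩
      · exact absurd (m1.trans hQ) hr
      · refine ⟨P4abcd, Or.inr ⟨habcd, habcd.symm.trans hQ.symm, h34, e,
          a3.symm, m2.trans hQ, hr, m1, a1, ?_⟩⟩
        exact a1.symm.trans (m1.symm.trans a1')
    · exact ⟨P4abcd, Or.inl ⟨h34, fun h => hQ (h34.trans h), habcd⟩⟩
  · -- Case 2 : A, B
    obtain ⟨a1, a2, a3⟩ := hA1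
    obtain ⟨b1', b2', b3', f, c1', c2', c3', c4', c5', c6'⟩ := hB2
    have habcd : δ a b c = δ a b d := a3.trans b1'.symm
    have h34 : δ a c d = δ b c d := eq4 hs h4 P4abcd habcd
    by_cases hQ : δ a c d = δ a b c
    · have hbcd : δ b c d = δ a b c := h34.symm.trans hQ
      have hq : δ a c e ≠ δ a b c := fun h => a2 (a1.symm.trans h)
      have hade : δ a d e = δ a b c := (a3.trans b2').symm
      have habf : δ a b f = δ a b c := c1'.trans habcd.symm
      have hdef : δ d e f = δ a b c := c2'.trans habcd.symm
      have hu : δ a e f ≠ δ a b c := fun h => c3' (h.trans habcd)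
      have hadf : δ a d f = δ a e f := c4'.symm
      have hbdf : δ b d f = δ a e f := (c4'.trans c5').symm
      have hbef : δ b e f = δ a e f := (c4'.trans (c5'.trans c6')).symm
      obtain ⟨hfa, hfb, hfd, hfe⟩ := resolver_ne hv P4abde c1' c2'
      have hcde : δ c d e = δ a c e := by
        have hne : δ a c d ≠ δ a c e := by rw [hQ]; exact fun h => hq h.symm
        rcases solve4 hs h4 P4acde hne with ⟨m1, m2⟩ | ⟨m1, m2⟩
        · exact m2
        · exact absurd (m1.symm.trans hade) hq
      have hfc : f ≠ c := by
        intro h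
        rw [h] at c2'
        apply hq
        rw [← hcde, show δ c d e = δ d e c from rot1 hs c d e]
        exact c2'.trans habcd.symm
      have hkey : (δ c d f = δ a c e ∧ δ c e f = δ a b c) ∨
          (δ c d f = δ a b c ∧ δ c e f = δ a c e) := by
        have hP4' : P4 d e c f := ⟨hde, hcd.symm, hfd.symm, hce.symm, hfe.symm, hfc.symm⟩
        have hne : δ d e c ≠ δ d e f := by
          rw [show δ d e c = δ c d e from (rot1 hs c d e).symm, hcde, hdef]
          exact hq
        rcases solve4 hs h4 hP4' hne with ⟨m1, m2⟩ | ⟨m1, m2⟩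
        · rw [show δ d c f = δ c d f from sw12 hs d c f,
            show δ d e c = δ c d e from (rot1 hs c d e).symm, hcde] at m1
          rw [show δ e c f = δ c e f from sw12 hs e c f, hdef] at m2
          exact Or.inl ⟨m1, m2⟩
        · rw [show δ d c f = δ c d f from sw12 hs d c f, hdef] at m1
          rw [show δ e c f = δ c e f from sw12 hs e c f,
            show δ d e c = δ c d e from (rot1 hs c d e).symm, hcde] at m2
          exact Or.inr ⟨m1, m2⟩
      rcases hkey with ⟨k1, k2⟩ | ⟨k1, k2⟩
      · -- contradiction via five-cycle on (a,c,f,e,d)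
        exfalso
        have hstep : δ a c f = δ a b c ∧ δ a e f = δ a c e := by
          have hP4' : P4 c d a f := ⟨hcd, hac.symm, hfc.symm, had.symm, hfd.symm, hfa.symm⟩
          have hne : δ c d a ≠ δ c d f := by
            rw [show δ c d a = δ a c d from rot2 hs c d a, hQ, k1]
            exact fun h => hq h.symm
          rcases solve4 hs h4 hP4' hne with ⟨m1, m2⟩ | ⟨m1, m2⟩
          · rw [show δ c a f = δ a c f from sw12 hs c a f,
              show δ c d a = δ a c d from rot2 hs c d a, hQ] at m1
            rw [show δ d a f = δ a d f from sw12 hs d a f, k1, hadf] at m2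
            exact ⟨m1, m2⟩
          · rw [show δ d a f = δ a d f from sw12 hs d a f,
              show δ c d a = δ a c d from rot2 hs c d a, hQ, hadf] at m2
            exact absurd m2 hu
        obtain ⟨hacf, htq⟩ := hstep
        have hbcf : δ b c f = δ a b c := by
          have hP4' : P4 c d b f := ⟨hcd, hbc.symm, hfc.symm, hbd.symm, hfd.symm, hfb.symm⟩
          have hne : δ c d b ≠ δ c d f := by
            rw [show δ c d b = δ b c d from rot2 hs c d b, hbcd, k1]
            exact fun h => hq h.symm
          rcases solve4 hs h4 hP4' hne with ⟨m1, m2⟩ | ⟨m1, m2⟩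
          · rw [show δ c b f = δ b c f from sw12 hs c b f,
              show δ c d b = δ b c d from rot2 hs c d b, hbcd] at m1
            exact m1
          · rw [show δ d b f = δ b d f from sw12 hs d b f,
              show δ c d b = δ b c d from rot2 hs c d b, hbcd, hbdf, htq] at m2
            exact absurd m2 hq
        exact five_cycle_contra hs h5 hac hfa.symm hae had hfc.symm hce hcd hfe
          hfd hde.symm (v := δ a b c) (w := δ a c e)
          (fun h => hq h.symm)
          hacf hQ
          (by rw [show δ a e d = δ a d e from sw23 hs a e d]; exact hade)
          (by rw [show δ c f e = δ c e f from sw23 hs c f e]; exact k2)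
          (by rw [show δ f e d = δ d e f from (sw13 hs d e f).symm]; exact hdef)
          rfl
          (by rw [show δ a f e = δ a e f from sw23 hs a f e]; exact htq)
          (by rw [show δ a f d = δ a d f from sw23 hs a f d]; exact hadf.trans htq)
          (by rw [show δ c f d = δ c d f from sw23 hs c f d]; exact k1)
          (by rw [show δ c e d = δ c d e from sw23 hs c e d]; exact hcde)
      · -- resolver f works
        have step1 : δ a c f = δ a e f := by
          have hP4' : P4 c d a f := ⟨hcd, hac.symm, hfc.symm, had.symm, hfd.symm, hfa.symm⟩
          have heqk : δ c d a = δ c d f := by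
            rw [show δ c d a = δ a c d from rot2 hs c d a, hQ, k1]
          have h' := eq4 hs h4 hP4' heqk
          rw [show δ c a f = δ a c f from sw12 hs c a f,
            show δ d a f = δ a d f from sw12 hs d a f, hadf] at h'
          exact h'
        have step2 : δ b c f = δ a e f := by
          have hP4' : P4 c d b f := ⟨hcd, hbc.symm, hfc.symm, hbd.symm, hfd.symm, hfb.symm⟩
          have heqk : δ c d b = δ c d f := by
            rw [show δ c d b = δ b c d from rot2 hs c d b, hbcd, k1]
          have h' := eq4 hs h4 hP4' heqk
          rw [show δ c b f = δ b c f from sw12 hs c b f,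
            show δ d b f = δ b d f from sw12 hs d b f, hbdf] at h'
          exact h'
        exact ⟨P4abcd, Or.inr ⟨habcd, habcd.symm.trans hQ.symm, h34, f, habf, k1,
          fun h => hu (hadf.symm.trans h), hadf.trans step1.symm,
          step1.trans step2.symm, step2.trans hbdf.symm⟩⟩
    · exact ⟨P4abcd, Or.inl ⟨h34, fun h => hQ (h34.trans h), habcd⟩⟩
  · -- Case 3 : B, A
    obtain ⟨b1, b2, b3, g, c1, c2, c3, c4, c5, c6⟩ := hB1
    obtain ⟨a1', a2', a3'⟩ := hA2
    have habcd : δ a b c = δ a b d := b1.trans a3'.symm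
    have h34 : δ a c d = δ b c d := eq4 hs h4 P4abcd habcd
    by_cases hQ : δ a c d = δ a b c
    · have hace : δ a c e = δ a b c := (b1.trans b2).symm
      have hbce : δ b c e = δ a b c := (b1.trans (b2.trans b3)).symm
      have hr : δ a d e ≠ δ a b c := fun h => a2' (a1'.symm.trans (h.trans habcd))
      have hbde : δ b d e = δ a d e := a1'.symm
      have hcde : δ c d e = δ a d e := by
        have h' := eq4 hs h4 P4acde (hQ.trans hace.symm)
        exact h'.symm
      have habg : δ a b g = δ a b c := c1
      have hceg : δ c e g = δ a b c := c2
      have ht : δ a e g ≠ δ a b c := c3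
      have hacg : δ a c g = δ a e g := c4.symm
      have hbcg : δ b c g = δ a e g := (c4.trans c5).symm
      have hbeg : δ b e g = δ a e g := (c4.trans (c5.trans c6)).symm
      obtain ⟨hga, hgb, hgc, hge⟩ := resolver_ne hv P4abce c1 c2
      have hgd : g ≠ d := by
        intro h
        rw [h] at c2
        apply hr
        rw [← hcde, show δ c d e = δ c e d from sw23 hs c d e]
        exact c2
      -- {c,d,e,g}
      have hkey : (δ c d g = δ a d e ∧ δ d e g = δ a b c) ∨
          (δ c d g = δ a b c ∧ δ d e g = δ a d e) := by
        have hP4' : P4 c e d g := ⟨hce, hcd, hgc.symm, hde.symm, hge.symm, hgd.symm⟩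
        have hne : δ c e d ≠ δ c e g := by
          rw [show δ c e d = δ c d e from sw23 hs c e d, hcde, hceg]
          exact hr
        rcases solve4 hs h4 hP4' hne with ⟨m1, m2⟩ | ⟨m1, m2⟩
        · rw [show δ c e d = δ c d e from sw23 hs c e d, hcde] at m1
          rw [show δ e d g = δ d e g from sw12 hs e d g, hceg] at m2
          exact Or.inl ⟨m1, m2⟩
        · rw [hceg] at m1
          rw [show δ e d g = δ d e g from sw12 hs e d g,
            show δ c e d = δ c d e from sw23 hs c e d, hcde] at m2
          exact Or.inr ⟨m1, m2⟩
      rcases hkey with ⟨k1, k2⟩ | ⟨k1, k2⟩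
      · -- contradiction via five-cycle on (a,c,e,g,d)
        exfalso
        have hstep : δ a d g = δ a b c ∧ δ a e g = δ a d e := by
          have hP4' : P4 d e a g := ⟨hde, had.symm, hgd.symm, hae.symm, hge.symm, hga.symm⟩
          have hne : δ d e a ≠ δ d e g := by
            rw [show δ d e a = δ a d e from rot2 hs d e a, k2]
            exact hr
          rcases solve4 hs h4 hP4' hne with ⟨m1, m2⟩ | ⟨m1, m2⟩
          · rw [show δ e a g = δ a e g from sw12 hs e a g, k2] at m2
            exact absurd m2 ht
          · rw [show δ d a g = δ a d g from sw12 hs d a g, k2] at m1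
            rw [show δ e a g = δ a e g from sw12 hs e a g,
              show δ d e a = δ a d e from rot2 hs d e a] at m2
            exact ⟨m1, m2⟩
        obtain ⟨hadg, htr⟩ := hstep
        have hbdg : δ b d g = δ a b c := by
          have hP4' : P4 d e b g := ⟨hde, hbd.symm, hgd.symm, hbe.symm, hge.symm, hgb.symm⟩
          have hne : δ d e b ≠ δ d e g := by
            rw [show δ d e b = δ b d e from rot2 hs d e b, hbde, k2]
            exact hr
          rcases solve4 hs h4 hP4' hne with ⟨m1, m2⟩ | ⟨m1, m2⟩
          · rw [show δ e b g = δ b e g from sw12 hs e b g, k2, hbeg, htr] at m2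
            exact absurd m2 hr
          · rw [show δ d b g = δ b d g from sw12 hs d b g, k2] at m1
            exact m1
        exact five_cycle_contra hs h5 hac hae hga.symm had hce hgc.symm hcd hge.symm
          hde.symm hgd (v := δ a b c) (w := δ a d e)
          (fun h => hr h.symm)
          hace hQ
          (by rw [show δ a g d = δ a d g from sw23 hs a g d]; exact hadg)
          hceg
          (by rw [show δ e g d = δ d e g from (rot1 hs d e g).symm]; exact k2)
          (hacg.trans htr)
          htr
          (by rw [show δ a e d = δ a d e from sw23 hs a e d])
          (by rw [show δ c e d = δ c d e from sw23 hs c e d]; exact hcde)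
          (by rw [show δ c g d = δ c d g from sw23 hs c g d]; exact k1)
      · -- resolver g works
        have hadg : δ a d g = δ a e g := by
          have hP4' : P4 d e a g := ⟨hde, had.symm, hgd.symm, hae.symm, hge.symm, hga.symm⟩
          have heqk : δ d e a = δ d e g := by
            rw [show δ d e a = δ a d e from rot2 hs d e a, k2]
          have h' := eq4 hs h4 hP4' heqk
          rw [show δ d a g = δ a d g from sw12 hs d a g,
            show δ e a g = δ a e g from sw12 hs e a g] at h'
          exact h'
        have hbdg : δ b d g = δ a e g := by
          have hP4' : P4 d e b g := ⟨hde, hbd.symm, hgd.symm, hbe.symm, hge.symm, hgb.symm⟩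
          have heqk : δ d e b = δ d e g := by
            rw [show δ d e b = δ b d e from rot2 hs d e b, hbde, k2]
          have h' := eq4 hs h4 hP4' heqk
          rw [show δ d b g = δ b d g from sw12 hs d b g,
            show δ e b g = δ b e g from sw12 hs e b g, hbeg] at h'
          exact h'
        exact ⟨P4abcd, Or.inr ⟨habcd, habcd.symm.trans hQ.symm, h34, g, habg, k1,
          fun h => ht (hadg.symm.trans h), hadg.trans hacg.symm,
          hacg.trans hbcg.symm, hbcg.trans hbdg.symm⟩⟩
    · exact ⟨P4abcd, Or.inl ⟨h34, fun h => hQ (h34.trans h), habcd⟩⟩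
  · -- Case 4 : B, B
    obtain ⟨b1, b2, b3, g, c1, c2, c3, c4, c5, c6⟩ := hB1
    obtain ⟨b1', b2', b3', f, c1', c2', c3', c4', c5', c6'⟩ := hB2
    have habcd : δ a b c = δ a b d := b1.trans b1'.symm
    have h34 : δ a c d = δ b c d := eq4 hs h4 P4abcd habcd
    by_cases hQ : δ a c d = δ a b c
    · have hace : δ a c e = δ a b c := (b1.trans b2).symm
      have hbce : δ b c e = δ a b c := (b1.trans (b2.trans b3)).symm
      have hade : δ a d e = δ a b c := (b1.trans b2').symm
      have hbde : δ b d e = δ a b c := b3'.symm.trans hade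
      have habg : δ a b g = δ a b c := c1
      have hceg : δ c e g = δ a b c := c2
      have ht : δ a e g ≠ δ a b c := c3
      have hacg : δ a c g = δ a e g := c4.symm
      have hbcg : δ b c g = δ a e g := (c4.trans c5).symm
      have hbeg : δ b e g = δ a e g := (c4.trans (c5.trans c6)).symm
      have habf : δ a b f = δ a b c := c1'.trans habcd.symm
      have hdef : δ d e f = δ a b c := c2'.trans habcd.symm
      have hu : δ a e f ≠ δ a b c := fun h => c3' (h.trans habcd)
      have hadf : δ a d f = δ a e f := c4'.symm
      have hbdf : δ b d f = δ a e f := (c4'.trans c5').symm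
      have hbef : δ b e f = δ a e f := (c4'.trans (c5'.trans c6')).symm
      obtain ⟨hga, hgb, hgc, hge⟩ := resolver_ne hv P4abce c1 c2
      obtain ⟨hfa, hfb, hfd, hfe⟩ := resolver_ne hv P4abde c1' c2'
      have hcde : δ c d e = δ a b c := by
        have h' := eq4 hs h4 P4acde (hQ.trans hace.symm)
        exact h'.symm.trans hade
      have hfc : f ≠ c := by
        intro h
        apply hu
        rw [h, show δ a e c = δ a c e from sw23 hs a e c]
        exact hace
      have hgd : g ≠ d := by
        intro h
        apply ht
        rw [h, show δ a e d = δ a d e from sw23 hs a e d]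
        exact hade
      -- δ c d f = δ c e f
      have hν : δ c d f = δ c e f := by
        have hP4' : P4 d e c f := ⟨hde, hcd.symm, hfd.symm, hce.symm, hfe.symm, hfc.symm⟩
        have heqk : δ d e c = δ d e f := by
          rw [show δ d e c = δ c d e from (rot1 hs c d e).symm, hcde, hdef]
        have h' := eq4 hs h4 hP4' heqk
        rw [show δ d c f = δ c d f from sw12 hs d c f,
          show δ e c f = δ c e f from sw12 hs e c f] at h'
        exact h'
      -- {a,c,e,f}
      have hkey : (δ a c f = δ a b c ∧ δ c e f = δ a e f) ∨
          (δ a c f = δ a e f ∧ δ c e f = δ a b c) := by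
        have hP4' : P4 a e c f := ⟨hae, hac, hfa.symm, hce.symm, hfe.symm, hfc.symm⟩
        have hne : δ a e c ≠ δ a e f := by
          rw [show δ a e c = δ a c e from sw23 hs a e c, hace]
          exact fun h => hu h.symm
        rcases solve4 hs h4 hP4' hne with ⟨m1, m2⟩ | ⟨m1, m2⟩
        · rw [show δ a e c = δ a c e from sw23 hs a e c, hace] at m1
          rw [show δ e c f = δ c e f from sw12 hs e c f] at m2
          exact Or.inl ⟨m1, m2⟩
        · rw [show δ e c f = δ c e f from sw12 hs e c f,
            show δ a e c = δ a c e from sw23 hs a e c, hace] at m2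
          exact Or.inr ⟨m1, m2⟩
      rcases hkey with ⟨hacf, hcef⟩ | ⟨hacf, hcef⟩
      · -- branch (ii) : δ a c f = p, δ c e f = u ; analyse g
        have hcdf : δ c d f = δ a e f := hν.trans hcef
        have hbcf : δ b c f = δ a b c := by
          have hP4' : P4 b e c f := ⟨hbe, hbc, hfb.symm, hce.symm, hfe.symm, hfc.symm⟩
          have hne : δ b e c ≠ δ b e f := by
            rw [show δ b e c = δ b c e from sw23 hs b e c, hbce, hbef]
            exact fun h => hu h.symm
          rcases solve4 hs h4 hP4' hne with ⟨m1, m2⟩ | ⟨m1, m2⟩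
          · rw [show δ b e c = δ b c e from sw23 hs b e c, hbce] at m1
            exact m1
          · rw [show δ e c f = δ c e f from sw12 hs e c f,
              show δ b e c = δ b c e from sw23 hs b e c, hbce, hcef] at m2
            exact absurd m2 hu
        have hμ : δ c d g = δ d e g := by
          have hP4' : P4 c e d g := ⟨hce, hcd, hgc.symm, hde.symm, hge.symm, hgd.symm⟩
          have heqk : δ c e d = δ c e g := by
            rw [show δ c e d = δ c d e from sw23 hs c e d, hcde, hceg]
          have h' := eq4 hs h4 hP4' heqk
          rw [show δ e d g = δ d e g from sw12 hs e d g] at h'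
          exact h'
        -- {a,d,e,g}
        have hkey2 : (δ a d g = δ a b c ∧ δ d e g = δ a e g) ∨
            (δ a d g = δ a e g ∧ δ d e g = δ a b c) := by
          have hP4' : P4 a e d g := ⟨hae, had, hga.symm, hde.symm, hge.symm, hgd.symm⟩
          have hne : δ a e d ≠ δ a e g := by
            rw [show δ a e d = δ a d e from sw23 hs a e d, hade]
            exact fun h => ht h.symm
          rcases solve4 hs h4 hP4' hne with ⟨m1, m2⟩ | ⟨m1, m2⟩
          · rw [show δ a e d = δ a d e from sw23 hs a e d, hade] at m1
            rw [show δ e d g = δ d e g from sw12 hs e d g] at m2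
            exact Or.inl ⟨m1, m2⟩
          · rw [show δ e d g = δ d e g from sw12 hs e d g,
              show δ a e d = δ a d e from sw23 hs a e d, hade] at m2
            exact Or.inr ⟨m1, m2⟩
        rcases hkey2 with ⟨hadg, hdeg⟩ | ⟨hadg, hdeg⟩
        · -- branch (ii-b) : contradiction via five point condition
          exfalso
          have hcdg : δ c d g = δ a e g := hμ.trans hdeg
          have hbdg : δ b d g = δ a b c := by
            have hP4' : P4 d e b g := ⟨hde, hbd.symm, hgd.symm, hbe.symm, hge.symm, hgb.symm⟩
            have hne : δ d e b ≠ δ d e g := by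
              rw [show δ d e b = δ b d e from rot2 hs d e b, hbde, hdeg]
              exact fun h => ht h.symm
            rcases solve4 hs h4 hP4' hne with ⟨m1, m2⟩ | ⟨m1, m2⟩
            · rw [show δ d b g = δ b d g from sw12 hs d b g,
                show δ d e b = δ b d e from rot2 hs d e b, hbde] at m1
              exact m1
            · rw [show δ e b g = δ b e g from sw12 hs e b g, hbeg,
                show δ d e b = δ b d e from rot2 hs d e b, hbde] at m2
              exact absurd m2 ht
          have hfg : f ≠ g := by
            intro h
            apply hu
            rw [← hadf, h]
            exact hadg
          -- {c,e,f,g} and {d,e,f,g}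
          have hkey3 : (δ c f g = δ a e f ∧ δ e f g = δ a b c) ∨
              (δ c f g = δ a b c ∧ δ e f g = δ a e f) := by
            have hP4' : P4 c e f g := ⟨hce, hfc.symm, hgc.symm, hfe.symm, hge.symm, hfg⟩
            have hne : δ c e f ≠ δ c e g := by
              rw [hcef, hceg]
              exact hu
            rcases solve4 hs h4 hP4' hne with ⟨m1, m2⟩ | ⟨m1, m2⟩
            · rw [hcef] at m1
              rw [hceg] at m2
              exact Or.inl ⟨m1, m2⟩
            · rw [hceg] at m1
              rw [hcef] at m2
              exact Or.inr ⟨m1, m2⟩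
          have hkey4 : (δ d f g = δ a b c ∧ δ e f g = δ a e g) ∨
              (δ d f g = δ a e g ∧ δ e f g = δ a b c) := by
            have hP4' : P4 d e f g := ⟨hde, hfd.symm, hgd.symm, hfe.symm, hge.symm, hfg⟩
            have hne : δ d e f ≠ δ d e g := by
              rw [hdef, hdeg]
              exact fun h => ht h.symm
            rcases solve4 hs h4 hP4' hne with ⟨m1, m2⟩ | ⟨m1, m2⟩
            · rw [hdef] at m1
              rw [hdeg] at m2
              exact Or.inl ⟨m1, m2⟩
            · rw [hdeg] at m1
              rw [hdef] at m2
              exact Or.inr ⟨m1, m2⟩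
          rcases hkey3 with ⟨n1, n2⟩ | ⟨n1, n2⟩
          · -- δ e f g = p
            -- {a,e,f,g} : shared pair {e,f}
            have hstep : δ a e g = δ a e f ∧ δ a f g = δ a b c := by
              have hP4' : P4 e f a g := ⟨hfe.symm, hae.symm, hge.symm, hfa, hfg, hga.symm⟩
              have hne : δ e f a ≠ δ e f g := by
                rw [show δ e f a = δ a e f from rot2 hs e f a, n2]
                exact hu
              rcases solve4 hs h4 hP4' hne with ⟨m1, m2⟩ | ⟨m1, m2⟩
              · rw [show δ e a g = δ a e g from sw12 hs e a g,
                  show δ e f a = δ a e f from rot2 hs e f a] at m1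
                rw [show δ f a g = δ a f g from sw12 hs f a g, n2] at m2
                exact ⟨m1, m2⟩
              · rw [show δ e a g = δ a e g from sw12 hs e a g, n2] at m1
                exact absurd m1 ht
            obtain ⟨htu, hafg⟩ := hstep
            -- five cycle on (a,c,e,g,f)
            exact five_cycle_contra hs h5 hac hae hga.symm hfa.symm hce hgc.symm hfc.symm
              hge.symm hfe.symm hfg.symm (v := δ a b c) (w := δ a e f)
              (fun h => hu h.symm)
              hace hacf
              (by rw [show δ a g f = δ a f g from sw23 hs a g f]; exact hafg)
              hceg
              (by rw [show δ e g f = δ e f g from sw23 hs e g f]; exact n2)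
              (hacg.trans htu)
              htu rfl hcef
              (by rw [show δ c g f = δ c f g from sw23 hs c g f]; exact n1)
          · -- δ e f g = u
            rcases hkey4 with ⟨o1, o2⟩ | ⟨o1, o2⟩
            swap
            · exact absurd (o2.symm.trans n2) (fun h => hu h.symm)
            have hdfg : δ d f g = δ a b c := o1
            have htu : δ a e g = δ a e f := o2.symm.trans n2
            -- five cycle on (c,e,d,f,g)
            exact five_cycle_contra hs h5 hce hcd hfc.symm hgc.symm hde.symm hfe.symm
              hge.symm hfd.symm hgd.symm hfg (v := δ a b c) (w := δ a e f)
              (fun h => hu h.symm)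
              (by rw [show δ c e d = δ c d e from sw23 hs c e d]; exact hcde)
              hceg n1
              (by rw [show δ e d f = δ d e f from sw12 hs e d f]; exact hdef)
              hdfg hcef hcdf
              (hcdg.trans htu)
              (by rw [show δ e d g = δ d e g from sw12 hs e d g]; exact hdeg.trans htu)
              n2
        · -- branch (ii-a) : resolver g works
          have hcdg : δ c d g = δ a b c := hμ.trans hdeg
          have hbdg : δ b d g = δ a e g := by
            have hP4' : P4 d e b g := ⟨hde, hbd.symm, hgd.symm, hbe.symm, hge.symm, hgb.symm⟩
            have heqk : δ d e b = δ d e g := by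
              rw [show δ d e b = δ b d e from rot2 hs d e b, hbde, hdeg]
            have h' := eq4 hs h4 hP4' heqk
            rw [show δ d b g = δ b d g from sw12 hs d b g,
              show δ e b g = δ b e g from sw12 hs e b g, hbeg] at h'
            exact h'
          exact ⟨P4abcd, Or.inr ⟨habcd, habcd.symm.trans hQ.symm, h34, g, habg, hcdg,
            fun h => ht (hadg.symm.trans h), hadg.trans hacg.symm,
            hacg.trans hbcg.symm, hbcg.trans hbdg.symm⟩⟩
      · -- branch (i) : δ a c f = u, δ c e f = p : resolver f works
        have hcdf : δ c d f = δ a b c := hν.trans hcef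
        have hbcf : δ b c f = δ a e f := by
          have hP4' : P4 b e c f := ⟨hbe, hbc, hfb.symm, hce.symm, hfe.symm, hfc.symm⟩
          have hne : δ b e c ≠ δ b e f := by
            rw [show δ b e c = δ b c e from sw23 hs b e c, hbce, hbef]
            exact fun h => hu h.symm
          rcases solve4 hs h4 hP4' hne with ⟨m1, m2⟩ | ⟨m1, m2⟩
          · rw [show δ e c f = δ c e f from sw12 hs e c f, hbef, hcef] at m2
            exact absurd m2 (fun h => hu h.symm)
          · rw [show δ b c f = δ b c f from rfl, hbef] at m1
            exact m1
        exact ⟨P4abcd, Or.inr ⟨habcd, habcd.symm.trans hQ.symm, h34, f, habf, hcdf,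
          fun h => hu (hadf.symm.trans h), hadf.trans hacf.symm,
          hacf.trans hbcf.symm, hbcf.trans hbdf.symm⟩⟩
    · exact ⟨P4abcd, Or.inl ⟨h34, fun h => hQ (h34.trans h), habcd⟩⟩

end TransSection
section SatSection

set_option linter.unusedSectionVars false

variable {X M : Type} [DecidableEq X] {δ : X → X → X → Option M}

lemma sat_main (hs : Symm3 δ) (hv : VanishCond δ) (h4 : FourPointCond δ)
    (h5 : FivePointCond δ) : SaturatedQ (Generates δ) := by
  rintro a b c d e ⟨⟨hab, hac, had, hbc, hbd, hcd⟩, hae, hbe, hce, hde⟩ q1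
  have P4abcd : P4 a b c d := ⟨hab, hac, had, hbc, hbd, hcd⟩
  have P4abce : P4 a b c e := ⟨hab, hac, hae, hbc, hbe, hce⟩
  have P4acde : P4 a c d e := ⟨hac, had, hae, hcd, hce, hde⟩
  have P4bcde : P4 b c d e := ⟨hbc, hbd, hbe, hcd, hce, hde⟩
  have P4aecd : P4 a e c d := ⟨hae, hac, had, hce.symm, hde.symm, hcd⟩
  obtain ⟨_, hA | hB⟩ := q1
  · -- Case I : quartet of type A
    obtain ⟨a1, a2, a3⟩ := hA
    have hqp : δ a c d ≠ δ a b c := fun h => a2 (a1.symm.trans h)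
    rcases cls hs h4 P4abce with ⟨e1, e2, e3⟩ | ⟨e1, e2, e3⟩ | ⟨e1, e2, e3⟩ | ⟨e1, e2, e3⟩
    · -- (I-1) all equal on abce
      have hace : δ a c e = δ a b c := (e1.trans e2).symm
      have hbce : δ b c e = δ a b c := e3.symm.trans hace
      have hne : δ a c d ≠ δ a c e := by rw [hace]; exact hqp
      rcases solve4 hs h4 P4acde hne with ⟨m1, m2⟩ | ⟨m1, m2⟩
      · -- resolver d gives Q abce
        have hcde : δ c d e = δ a b c := m2.trans hace
        have hne2 : δ b c d ≠ δ b c e := by rw [hbce]; exact a2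
        have hbde : δ b d e = δ b c d := by
          rcases solve4 hs h4 P4bcde hne2 with ⟨n1, n2⟩ | ⟨n1, n2⟩
          · exact n1
          · exact absurd (hcde.symm.trans n2).symm a2
        refine Or.inr ⟨P4abce, Or.inr ⟨e1, e2, e3, d, a3.symm, ?_, ?_, ?_, a1, ?_⟩⟩
        · rw [show δ c e d = δ c d e from sw23 hs c e d]; exact hcde
        · rw [show δ a e d = δ a d e from sw23 hs a e d]
          exact fun h => hqp (m1.symm.trans h)
        · rw [show δ a e d = δ a d e from sw23 hs a e d]; exact m1
        · rw [show δ b e d = δ b d e from sw23 hs b e d]; exact hbde.symm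
      · -- Q aecd of type A
        refine Or.inl ⟨P4aecd, Or.inl ⟨?_, ?_, ?_⟩⟩
        · rw [show δ e c d = δ c d e from (rot2 hs c d e).symm]; exact m2.symm
        · rw [show δ e c d = δ c d e from (rot2 hs c d e).symm, m2,
            show δ a e c = δ a c e from sw23 hs a e c]
          exact hne
        · rw [show δ a e c = δ a c e from sw23 hs a e c,
            show δ a e d = δ a d e from sw23 hs a e d]
          exact m1.symm
    · -- (I-2) pattern ab|ce : Q abce of type A
      exact Or.inr ⟨P4abce, Or.inl ⟨e2, fun h => e3 (e2.trans h).symm, e1⟩⟩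
    · -- (I-3) pattern ac|be
      have hace : δ a c e = δ a b c := e1.symm
      have hne : δ a c d ≠ δ a c e := by rw [hace]; exact hqp
      rcases solve4 hs h4 P4acde hne with ⟨m1, m2⟩ | ⟨m1, m2⟩
      · -- five-cycle contradiction
        exfalso
        have hcde : δ c d e = δ a b c := m2.trans hace
        have P4cdbe : P4 c d b e := ⟨hcd, hbc.symm, hce, hbd.symm, hde, hbe⟩
        have hne2 : δ c d b ≠ δ c d e := by
          rw [show δ c d b = δ b c d from (rot1 hs b c d).symm, ← a1, hcde]
          exact hqp
        rcases solve4 hs h4 P4cdbe hne2 with ⟨n1, n2⟩ | ⟨n1, n2⟩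
        · rw [show δ c b e = δ b c e from sw12 hs c b e,
            show δ c d b = δ b c d from (rot1 hs b c d).symm] at n1
          rw [show δ d b e = δ b d e from sw12 hs d b e] at n2
          exact five_cycle_contra hs h5 hab had hae hac hbd hbe hbc hde hcd.symm
            hce.symm (v := δ a b c) (w := δ a c d)
            (fun h => hqp h.symm)
            a3.symm rfl
            (by rw [show δ a e c = δ a c e from sw23 hs a e c]; exact hace)
            (n2.trans hcde)
            (by rw [show δ d e c = δ c d e from (rot1 hs c d e).symm]; exact hcde)
            (e2.trans (n1.trans a1.symm))
            m1
            (by rw [show δ a d c = δ a c d from sw23 hs a d c])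
            (by rw [show δ b d c = δ b c d from sw23 hs b d c]; exact a1.symm)
            (by rw [show δ b e c = δ b c e from sw23 hs b e c]; exact n1.trans a1.symm)
        · rw [show δ c b e = δ b c e from sw12 hs c b e] at n1
          exact e3 (e2.trans (n1.trans hcde)).symm
      · -- Q aecd of type A
        refine Or.inl ⟨P4aecd, Or.inl ⟨?_, ?_, ?_⟩⟩
        · rw [show δ e c d = δ c d e from (rot2 hs c d e).symm]; exact m2.symm
        · rw [show δ e c d = δ c d e from (rot2 hs c d e).symm, m2,
            show δ a e c = δ a c e from sw23 hs a e c]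
          exact hne
        · rw [show δ a e c = δ a c e from sw23 hs a e c,
            show δ a e d = δ a d e from sw23 hs a e d]
          exact m1.symm
    · -- (I-4) pattern ae|bc
      have hbce : δ b c e = δ a b c := e1.symm
      have hwp : δ a c e ≠ δ a b c := fun h => e3 (e2.trans h).symm
      rcases cls hs h4 P4acde with ⟨f1, f2, f3⟩ | ⟨f1, f2, f3⟩ | ⟨f1, f2, f3⟩ | ⟨f1, f2, f3⟩
      · -- all equal on acde : resolver b gives Q aecd
        have hne2 : δ b c d ≠ δ b c e := by rw [hbce, ← a1]; exact hqp
        have hbde : δ b d e = δ a b c := by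
          rcases solve4 hs h4 P4bcde hne2 with ⟨n1, n2⟩ | ⟨n1, n2⟩
          · exact absurd ((f1.trans (f2.trans f3)).trans (n2.trans hbce)) hqp
          · exact n1.trans hbce
        refine Or.inl ⟨P4aecd, Or.inr ⟨?_, ?_, ?_, b, ?_, ?_, ?_, ?_, ?_, ?_⟩⟩
        · rw [show δ a e c = δ a c e from sw23 hs a e c,
            show δ a e d = δ a d e from sw23 hs a e d]
          exact f2
        · rw [show δ a e d = δ a d e from sw23 hs a e d]
          exact f2.symm.trans f1.symm
        · rw [show δ e c d = δ c d e from (rot2 hs c d e).symm]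
          exact f1.trans (f2.trans f3)
        · rw [show δ a e b = δ a b e from sw23 hs a e b,
            show δ a e c = δ a c e from sw23 hs a e c]
          exact e2
        · rw [show δ c d b = δ b c d from (rot1 hs b c d).symm,
            show δ a e c = δ a c e from sw23 hs a e c]
          exact a1.symm.trans f1
        · rw [show δ a d b = δ a b d from sw23 hs a d b,
            show δ a e c = δ a c e from sw23 hs a e c]
          exact fun h => hqp (f1.trans (a3.trans h).symm)
        · rw [show δ a d b = δ a b d from sw23 hs a d b,
            show δ a c b = δ a b c from sw23 hs a c b]
          exact a3.symm
        · rw [show δ a c b = δ a b c from sw23 hs a c b,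
            show δ e c b = δ b c e from (sw13 hs b c e).symm]
          exact hbce.symm
        · rw [show δ e c b = δ b c e from (sw13 hs b c e).symm,
            show δ e d b = δ b d e from (sw13 hs b d e).symm]
          exact hbce.trans hbde.symm
      · -- pattern ac|de on acde : five-cycle contradiction
        exfalso
        have hνp : δ a c d ≠ δ c d e := fun h => f3 (h.trans f2.symm)
        have P4cdbe : P4 c d b e := ⟨hcd, hbc.symm, hce, hbd.symm, hde, hbe⟩
        have hne2 : δ c d b ≠ δ c d e := by
          rw [show δ c d b = δ b c d from (rot1 hs b c d).symm, ← a1]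
          exact hνp
        rcases solve4 hs h4 P4cdbe hne2 with ⟨n1, n2⟩ | ⟨n1, n2⟩
        · rw [show δ c b e = δ b c e from sw12 hs c b e,
            show δ c d b = δ b c d from (rot1 hs b c d).symm] at n1
          exact hqp (a1.trans (n1.symm.trans hbce))
        · rw [show δ c b e = δ b c e from sw12 hs c b e] at n1
          rw [show δ d b e = δ b d e from sw12 hs d b e,
            show δ c d b = δ b c d from (rot1 hs b c d).symm] at n2
          have hνval : δ c d e = δ a b c := n1.symm.trans hbce
          exact five_cycle_contra hs h5 hab hac hae had hbc hbe hbd hce hcd hde.symm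
            (v := δ a b c) (w := δ a c d) (fun h => hqp h.symm)
            rfl a3.symm
            (by rw [show δ a e d = δ a d e from sw23 hs a e d]; exact f2.trans hνval)
            hbce
            (by rw [show δ c e d = δ c d e from sw23 hs c e d]; exact hνval)
            (e2.trans f1.symm)
            f1.symm rfl a1.symm
            (by rw [show δ b e d = δ b d e from sw23 hs b e d]; exact n2.trans a1.symm)
      · -- pattern ad|ce on acde : contradiction
        exfalso
        have P4cdbe : P4 c d b e := ⟨hcd, hbc.symm, hce, hbd.symm, hde, hbe⟩
        have hne2 : δ c d b ≠ δ c d e := by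
          rw [show δ c d b = δ b c d from (rot1 hs b c d).symm, ← a1, ← f2]
          exact f3
        rcases solve4 hs h4 P4cdbe hne2 with ⟨n1, n2⟩ | ⟨n1, n2⟩
        · rw [show δ c b e = δ b c e from sw12 hs c b e,
            show δ c d b = δ b c d from (rot1 hs b c d).symm] at n1
          exact hqp (a1.trans (n1.symm.trans hbce))
        · rw [show δ c b e = δ b c e from sw12 hs c b e] at n1
          exact hwp (f2.trans (n1.symm.trans hbce))
      · -- pattern ae|cd on acde : Q aecd of type A
        refine Or.inl ⟨P4aecd, Or.inl ⟨?_, ?_, ?_⟩⟩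
        · rw [show δ e c d = δ c d e from (rot2 hs c d e).symm]; exact f1
        · rw [show δ e c d = δ c d e from (rot2 hs c d e).symm,
            show δ a e c = δ a c e from sw23 hs a e c]
          exact fun h => f3 (f1.trans h)
        · rw [show δ a e c = δ a c e from sw23 hs a e c,
            show δ a e d = δ a d e from sw23 hs a e d]
          exact f2
  · -- Case II : quartet of type B
    obtain ⟨b1, b2, b3, f, c1, c2, c3, c4, c5, c6⟩ := hB
    have habd : δ a b d = δ a b c := b1.symm
    have hacd : δ a c d = δ a b c := (b1.trans b2).symm
    have hbcd : δ b c d = δ a b c := (b1.trans (b2.trans b3)).symm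
    have hacf : δ a c f = δ a d f := c4.symm
    have hbcf : δ b c f = δ a d f := (c4.trans c5).symm
    have hbdf : δ b d f = δ a d f := (c4.trans (c5.trans c6)).symm
    obtain ⟨hfa, hfb, hfc, hfd⟩ := resolver_ne hv P4abcd c1 c2
    by_cases hef : e = f
    · refine Or.inr ⟨P4abce, Or.inl ⟨?_, ?_, ?_⟩⟩
      · rw [hef]; exact c5
      · rw [hef]; exact fun h => c3 ((c4.trans c5).trans h)
      · rw [hef]; exact c1.symm
    · have hfe : f ≠ e := fun h => hef h.symm
      have P4abef : P4 a b e f := ⟨hab, hae, hfa.symm, hbe, hfb.symm, hef⟩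
      have P4acef : P4 a c e f := ⟨hac, hae, hfa.symm, hce, hfc.symm, hef⟩
      have P4bcef : P4 b c e f := ⟨hbc, hbe, hfb.symm, hce, hfc.symm, hef⟩
      have P4cdef : P4 c d e f := ⟨hcd, hce, hfc.symm, hde, hfd.symm, hef⟩
      have P4adef : P4 a d e f := ⟨had, hae, hfa.symm, hde, hfd.symm, hef⟩
      rcases cls hs h4 P4acde with ⟨f1, f2, f3⟩ | ⟨f1, f2, f3⟩ | ⟨f1, f2, f3⟩ | ⟨f1, f2, f3⟩
      · -- O1 : all equal on acde
        have hace : δ a c e = δ a b c := f1.symm.trans hacd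
        have hade : δ a d e = δ a b c := f2.symm.trans hace
        have hcde : δ c d e = δ a b c := f3.symm.trans hade
        have hx : δ c e f = δ d e f := eq4 hs h4 P4cdef (hcde.trans c2.symm)
        have hne : δ a c e ≠ δ a c f := by
          rw [hace, hacf]; exact fun h => c3 h.symm
        rcases solve4 hs h4 P4acef hne with ⟨m1, m2⟩ | ⟨m1, m2⟩
        · -- δ aef = p, δ cef = u : Q aecd with resolver f
          refine Or.inl ⟨P4aecd, Or.inr ⟨?_, ?_, ?_, f, ?_, ?_, ?_, c4, ?_, ?_⟩⟩
          · rw [show δ a e c = δ a c e from sw23 hs a e c,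
              show δ a e d = δ a d e from sw23 hs a e d]
            exact f2
          · rw [show δ a e d = δ a d e from sw23 hs a e d]
            exact f2.symm.trans f1.symm
          · rw [show δ e c d = δ c d e from (rot2 hs c d e).symm]
            exact f1.trans (f2.trans f3)
          · rw [show δ a e c = δ a c e from sw23 hs a e c]
            exact m1
          · rw [show δ a e c = δ a c e from sw23 hs a e c]
            exact c2.trans hace.symm
          · rw [show δ a e c = δ a c e from sw23 hs a e c]
            exact fun h => c3 (h.trans hace)
          · rw [show δ e c f = δ c e f from sw12 hs e c f]
            exact m2.symm
          · rw [show δ e c f = δ c e f from sw12 hs e c f,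
              show δ e d f = δ d e f from sw12 hs e d f]
            exact hx
        · -- δ aef = u, δ cef = p
          have hcef : δ c e f = δ a b c := m2.trans hace
          have haef_u : δ a e f = δ a d f := m1.trans hacf
          rcases cls hs h4 P4abce with ⟨g1, g2, g3⟩ | ⟨g1, g2, g3⟩ | ⟨g1, g2, g3⟩ | ⟨g1, g2, g3⟩
          · -- I1 : Q abce with resolver f
            have hbce_p : δ b c e = δ a b c := g3.symm.trans hace
            have hne2 : δ b c e ≠ δ b c f := by
              rw [hbce_p, hbcf]; exact fun h => c3 h.symm
            rcases solve4 hs h4 P4bcef hne2 with ⟨n1, n2⟩ | ⟨n1, n2⟩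
            · exact absurd ((hbcf.symm.trans n2.symm).trans hcef) c3
            · exact Or.inr ⟨P4abce, Or.inr ⟨g1, g2, g3, f, c1, hcef,
                fun h => c3 (haef_u.symm.trans h), m1, c5,
                hbcf.trans (n1.trans hbcf).symm⟩⟩
          · exact Or.inr ⟨P4abce, Or.inl ⟨g2, fun h => g3 (g2.trans h).symm, g1⟩⟩
          · -- I3
            have hne3 : δ a b e ≠ δ a b f := by
              rw [c1]; exact fun h => g3 h.symm
            rcases solve4 hs h4 P4abef hne3 with ⟨k1, k2⟩ | ⟨k1, k2⟩
            · -- five-cycle on (a,b,f,e,d)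
              exfalso
              have huw : δ a b e = δ a d f := k1.symm.trans haef_u
              have hne4 : δ b c d ≠ δ b c e := by
                rw [hbcd, ← g2]; exact g3
              have hbde_w : δ b d e = δ a b e := by
                rcases solve4 hs h4 P4bcde hne4 with ⟨n1, n2⟩ | ⟨n1, n2⟩
                · exact absurd (hcde.symm.trans (n2.trans g2.symm)) g3
                · exact n1.trans g2.symm
              exact five_cycle_contra hs h5 hab hfa.symm hae had hfb.symm hbe hbd
                hfe hfd hde.symm (v := δ a b c) (w := δ a d f)
                (fun h => c3 h.symm)
                c1 habd
                (by rw [show δ a e d = δ a d e from sw23 hs a e d]; exact hade)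
                (by rw [show δ b f e = δ b e f from sw23 hs b f e]; exact k2.trans c1)
                (by rw [show δ f e d = δ d e f from (sw13 hs d e f).symm]
                    exact hx.symm.trans hcef)
                huw
                (by rw [show δ a f e = δ a e f from sw23 hs a f e]; exact haef_u)
                (by rw [show δ a f d = δ a d f from sw23 hs a f d])
                (by rw [show δ b f d = δ b d f from sw23 hs b f d]; exact hbdf)
                (by rw [show δ b e d = δ b d e from sw23 hs b e d]
                    exact hbde_w.trans huw)
            · exact absurd (haef_u.symm.trans (k1.trans c1)) c3
          · exact absurd (g2.trans hace).symm g3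
      · -- O2 : pattern ac|de on acde
        have hace : δ a c e = δ a b c := f1.symm.trans hacd
        have hνp : δ a d e ≠ δ a b c := fun h => f3 (hacd.trans h.symm)
        have hne : δ a c e ≠ δ a c f := by
          rw [hace, hacf]; exact fun h => c3 h.symm
        have hne4 : δ c d e ≠ δ c d f := by
          rw [c2]; exact fun h => hνp (f2.trans h)
        rcases cls hs h4 P4abce with ⟨g1, g2, g3⟩ | ⟨g1, g2, g3⟩ | ⟨g1, g2, g3⟩ | ⟨g1, g2, g3⟩
        · -- I1
          rcases solve4 hs h4 P4acef hne with ⟨m1, m2⟩ | ⟨m1, m2⟩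
          · -- δ aef = p, δ cef = u
            rcases solve4 hs h4 P4cdef hne4 with ⟨o1, o2⟩ | ⟨o1, o2⟩
            · -- ν = u : five-cycle on (a,c,d,f,e)
              exfalso
              have hνu : δ c d e = δ a d f := o1.symm.trans (m2.trans hacf)
              exact five_cycle_contra hs h5 hac had hfa.symm hae hcd hfc.symm hce
                hfd.symm hde hfe (v := δ a b c) (w := δ a d f)
                (fun h => c3 h.symm)
                hacd hace
                (by rw [show δ a f e = δ a e f from sw23 hs a f e]; exact m1.trans hace)
                c2
                (by rw [show δ d f e = δ d e f from sw23 hs d f e]; exact o2.trans c2)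
                hacf rfl
                (f2.trans hνu)
                hνu
                (by rw [show δ c f e = δ c e f from sw23 hs c f e]; exact m2.trans hacf)
            · exact absurd ((hacf.symm.trans m2.symm).trans (o1.trans c2)) c3
          · -- δ aef = u, δ cef = p
            have hcef_p : δ c e f = δ a b c := m2.trans hace
            rcases solve4 hs h4 P4cdef hne4 with ⟨o1, o2⟩ | ⟨o1, o2⟩
            · exact absurd (f2.trans (o1.symm.trans hcef_p)) hνp
            · -- Q abce with resolver f
              have hbce_p : δ b c e = δ a b c := g3.symm.trans hace
              have hne2 : δ b c e ≠ δ b c f := by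
                rw [hbce_p, hbcf]; exact fun h => c3 h.symm
              rcases solve4 hs h4 P4bcef hne2 with ⟨n1, n2⟩ | ⟨n1, n2⟩
              · exact absurd ((hbcf.symm.trans n2.symm).trans hcef_p) c3
              · exact Or.inr ⟨P4abce, Or.inr ⟨g1, g2, g3, f, c1, hcef_p,
                  fun h => c3 ((hacf.symm.trans m1.symm).trans h), m1, c5,
                  hbcf.trans (n1.trans hbcf).symm⟩⟩
        · exact Or.inr ⟨P4abce, Or.inl ⟨g2, fun h => g3 (g2.trans h).symm, g1⟩⟩
        · -- I3
          have P4cdbe : P4 c d b e := ⟨hcd, hbc.symm, hce, hbd.symm, hde, hbe⟩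
          have hne2 : δ c d b ≠ δ c d e := by
            rw [show δ c d b = δ b c d from (rot1 hs b c d).symm, hbcd]
            exact fun h => hνp (f2.trans h.symm)
          rcases solve4 hs h4 P4cdbe hne2 with ⟨n1, n2⟩ | ⟨n1, n2⟩
          · rw [show δ c b e = δ b c e from sw12 hs c b e,
              show δ c d b = δ b c d from (rot1 hs b c d).symm] at n1
            exact absurd (g2.trans (n1.trans hbcd)).symm g3
          · rw [show δ c b e = δ b c e from sw12 hs c b e] at n1
            rw [show δ d b e = δ b d e from sw12 hs d b e,
              show δ c d b = δ b c d from (rot1 hs b c d).symm] at n2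
            have hbce_ν : δ b c e = δ c d e := n1
            have hbde_p : δ b d e = δ a b c := n2.trans hbcd
            have hw2ν : δ a b e = δ c d e := g2.trans hbce_ν
            have hne3 : δ a b e ≠ δ a b f := by
              rw [c1]; exact fun h => g3 h.symm
            by_cases hνu : δ a d e = δ a d f
            · rcases solve4 hs h4 P4abef hne3 with ⟨k1, k2⟩ | ⟨k1, k2⟩
              · -- five-cycle (a,b,f,e,c)
                exfalso
                rcases solve4 hs h4 P4acef hne with ⟨m1, m2⟩ | ⟨m1, m2⟩
                · exact g3 (k1.symm.trans (m1.trans hace)).symm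
                · have hcef_p : δ c e f = δ a b c := m2.trans hace
                  rcases solve4 hs h4 P4cdef hne4 with ⟨o1, o2⟩ | ⟨o1, o2⟩
                  · exact hνp (f2.trans (o1.symm.trans hcef_p))
                  · exact five_cycle_contra hs h5 hab hfa.symm hae hac hfb.symm hbe
                      hbc hfe hfc hce.symm (v := δ a b c) (w := δ a d f)
                      (fun h => c3 h.symm)
                      c1 rfl
                      (by rw [show δ a e c = δ a c e from sw23 hs a e c]; exact hace)
                      (by rw [show δ b f e = δ b e f from sw23 hs b f e]
                          exact k2.trans c1)
                      (by rw [show δ f e c = δ c e f from (sw13 hs c e f).symm]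
                          exact hcef_p)
                      (k1.symm.trans (m1.trans hacf))
                      (by rw [show δ a f e = δ a e f from sw23 hs a f e]
                          exact m1.trans hacf)
                      (by rw [show δ a f c = δ a c f from sw23 hs a f c]; exact hacf)
                      (by rw [show δ b f c = δ b c f from sw23 hs b f c]; exact hbcf)
                      (by rw [show δ b e c = δ b c e from sw23 hs b e c]
                          exact hbce_ν.trans (f2.symm.trans hνu))
              · -- five-cycle (a,b,d,e,f)
                exfalso
                have haef_p : δ a e f = δ a b c := k1.trans c1
                rcases solve4 hs h4 P4acef hne with ⟨m1, m2⟩ | ⟨m1, m2⟩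
                · have hcef_u : δ c e f = δ a d f := m2.trans hacf
                  rcases solve4 hs h4 P4cdef hne4 with ⟨o1, o2⟩ | ⟨o1, o2⟩
                  · have habe_u : δ a b e = δ a d f := hw2ν.trans (f2.symm.trans hνu)
                    exact five_cycle_contra hs h5 hab had hae hfa.symm hbd hbe
                      hfb.symm hde hfd.symm hef (v := δ a b c) (w := δ a d f)
                      (fun h => c3 h.symm)
                      habd c1 haef_p hbde_p (o2.trans c2)
                      habe_u hνu rfl hbdf
                      (k2.trans habe_u)
                  · exact c3 (hcef_u.symm.trans (o1.trans c2))
                · exact c3 ((hacf.symm.trans m1.symm).trans haef_p)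
            · -- ν ≠ u : contradiction
              exfalso
              rcases solve4 hs h4 P4abef hne3 with ⟨k1, k2⟩ | ⟨k1, k2⟩
              · rcases solve4 hs h4 P4acef hne with ⟨m1, m2⟩ | ⟨m1, m2⟩
                · exact g3 (k1.symm.trans (m1.trans hace)).symm
                · exact hνu (f2.trans (hw2ν.symm.trans (k1.symm.trans (m1.trans hacf))))
              · have haef_p : δ a e f = δ a b c := k1.trans c1
                rcases solve4 hs h4 P4acef hne with ⟨m1, m2⟩ | ⟨m1, m2⟩
                · have hcef_u : δ c e f = δ a d f := m2.trans hacf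
                  rcases solve4 hs h4 P4cdef hne4 with ⟨o1, o2⟩ | ⟨o1, o2⟩
                  · exact hνu (f2.trans (o1.symm.trans hcef_u))
                  · exact c3 (hcef_u.symm.trans (o1.trans c2))
                · exact c3 ((hacf.symm.trans m1.symm).trans haef_p)
        · exact absurd (g2.trans (f1.symm.trans hacd)).symm g3
      · -- O3 : pattern ad|ce on acde
        have hade : δ a d e = δ a b c := f1.symm.trans hacd
        have hwp : δ a c e ≠ δ a b c := fun h => f3 (hacd.trans h.symm)
        have hne5 : δ a d e ≠ δ a d f := by
          rw [hade]; exact fun h => c3 h.symm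
        rcases cls hs h4 P4abce with ⟨g1, g2, g3⟩ | ⟨g1, g2, g3⟩ | ⟨g1, g2, g3⟩ | ⟨g1, g2, g3⟩
        · exact absurd (g1.trans g2).symm hwp
        · exact Or.inr ⟨P4abce, Or.inl ⟨g2, fun h => g3 (g2.trans h).symm, g1⟩⟩
        · exact absurd g1.symm hwp
        · -- I4 : the γ case
          have hbce_p : δ b c e = δ a b c := g1.symm
          have hbde_w : δ b d e = δ a c e :=
            (eq4 hs h4 P4bcde (hbcd.trans hbce_p.symm)).trans f2.symm
          have hne3 : δ a b e ≠ δ a b f := by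
            rw [c1]; exact fun h => g3 h.symm
          by_cases hwu : δ a c e = δ a d f
          · have hx : δ a e f = δ c e f := eq4 hs h4 P4acef (hwu.trans c4)
            rcases solve4 hs h4 P4abef hne3 with ⟨k1, k2⟩ | ⟨k1, k2⟩
            · rcases solve4 hs h4 P4adef hne5 with ⟨l1, l2⟩ | ⟨l1, l2⟩
              · exact absurd (g2.symm.trans (k1.symm.trans (l1.trans hade))) hwp
              · -- five-cycle (a,b,f,e,d)
                exfalso
                exact five_cycle_contra hs h5 hab hfa.symm hae had hfb.symm hbe hbd
                  hfe hfd hde.symm (v := δ a b c) (w := δ a d f)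
                  (fun h => c3 h.symm)
                  c1 habd
                  (by rw [show δ a e d = δ a d e from sw23 hs a e d]; exact hade)
                  (by rw [show δ b f e = δ b e f from sw23 hs b f e]; exact k2.trans c1)
                  (by rw [show δ f e d = δ d e f from (sw13 hs d e f).symm]
                      exact l2.trans hade)
                  (k1.symm.trans l1)
                  (by rw [show δ a f e = δ a e f from sw23 hs a f e]; exact l1)
                  (by rw [show δ a f d = δ a d f from sw23 hs a f d])
                  (by rw [show δ b f d = δ b d f from sw23 hs b f d]; exact hbdf)
                  (by rw [show δ b e d = δ b d e from sw23 hs b e d]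
                      exact hbde_w.trans hwu)
            · have haef_p : δ a e f = δ a b c := k1.trans c1
              have hcef_p : δ c e f = δ a b c := hx.symm.trans haef_p
              rcases solve4 hs h4 P4adef hne5 with ⟨l1, l2⟩ | ⟨l1, l2⟩
              · -- five-cycle (a,d,c,f,e)
                exfalso
                exact five_cycle_contra hs h5 had hac hfa.symm hae hcd.symm hfd.symm
                  hde hfc.symm hce hfe (v := δ a b c) (w := δ a d f)
                  (fun h => c3 h.symm)
                  (by rw [show δ a d c = δ a c d from sw23 hs a d c]; exact hacd)
                  hade
                  (by rw [show δ a f e = δ a e f from sw23 hs a f e]; exact haef_p)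
                  (by rw [show δ d c f = δ c d f from sw12 hs d c f]; exact c2)
                  (by rw [show δ c f e = δ c e f from sw23 hs c f e]; exact hcef_p)
                  rfl hacf hwu
                  (by rw [show δ d c e = δ c d e from sw12 hs d c e]
                      exact f2.symm.trans hwu)
                  (by rw [show δ d f e = δ d e f from sw23 hs d f e]; exact l2)
              · exact absurd (l1.symm.trans haef_p) c3
          · -- w ≠ u : contradiction
            exfalso
            rcases solve4 hs h4 P4abef hne3 with ⟨k1, k2⟩ | ⟨k1, k2⟩
            · rcases solve4 hs h4 P4adef hne5 with ⟨l1, l2⟩ | ⟨l1, l2⟩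
              · exact hwp (g2.symm.trans (k1.symm.trans (l1.trans hade)))
              · exact hwu (g2.symm.trans (k1.symm.trans l1))
            · have haef_p : δ a e f = δ a b c := k1.trans c1
              have hne6 : δ a c e ≠ δ a c f := fun h => hwu (h.trans c4.symm)
              rcases solve4 hs h4 P4acef hne6 with ⟨m1, m2⟩ | ⟨m1, m2⟩
              · exact hwp (m1.symm.trans haef_p)
              · exact c3 ((c4.trans m1.symm).trans haef_p)
      · -- O4 : pattern ae|cd on acde : Q aecd of type A
        refine Or.inl ⟨P4aecd, Or.inl ⟨?_, ?_, ?_⟩⟩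
        · rw [show δ e c d = δ c d e from (rot2 hs c d e).symm]; exact f1
        · rw [show δ e c d = δ c d e from (rot2 hs c d e).symm,
            show δ a e c = δ a c e from sw23 hs a e c]
          exact fun h => f3 (f1.trans h)
        · rw [show δ a e c = δ a c e from sw23 hs a e c,
            show δ a e d = δ a d e from sw23 hs a e d]
          exact f2

end SatSection
/-- The quartets generated by a symbolic ternary metric form a thin,
transitive, and saturated quartet system on `X`. -/
theorem generated_quartets_thin_transitive_saturated
    {X M : Type} [Fintype X] [DecidableEq X] [Fintype M] [Nonempty M]
    (hX : 3 ≤ Fintype.card X)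
    (δ : X → X → X → Option M) (hδ : IsSymbolicTernaryMetric δ) :
    IsQuartetSystem (Generates δ) ∧ Thin (Generates δ) ∧
      TransitiveQ (Generates δ) ∧ SaturatedQ (Generates δ) := by
  obtain ⟨hs, hv, h4, h5⟩ := hδ
  exact ⟨genQS hs, thin_main hs hv h4 h5, trans_main hs hv h4 h5, sat_main hs hv h4 h5⟩
end PhyloPaper
end

section
/- For every discriminating symbolically dated phylogenetic tree (T,t) on X, no 5-element subset of X is 5-5 partitioned by the induced map δ_(T,t). -/
/-!
In a tree the medians of four points pair up (`med x y z = med x y u` and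
`med x z u = med y z u`, for one of the three ways of pairing the points), and a fifth point `v`
joins a strict quartet `xy|zu` on one of its two sides: `med x y v = med x y z` or
`med z u v = med z u x`. Reading this through `t`, any five taxa contain a pair `x, y` such that
`δ x y ·` is constant on the other three taxa `K`, and then `δ x k l = δ y k l` for `k, l ∈ K`.
So the number of 3-subsets on which `δ` takes a value `c` is `3ε + 2s + κ` with `ε, κ ∈ {0, 1}`,
where `s + κ` counts the 3-subsets of `{x} ∪ K` with value `c` and is therefore even.
This is never `5`.
-/

namespace PhyloPaper

variable {V X M : Type}

section Tree

open SimpleGraph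

variable {G : SimpleGraph V}

noncomputable def treePath (hG : G.IsTree) (x y : V) : G.Walk x y :=
  (hG.existsUnique_path x y).exists.choose

lemma treePath_isPath (hG : G.IsTree) (x y : V) : (treePath hG x y).IsPath :=
  (hG.existsUnique_path x y).exists.choose_spec

lemma eq_treePath (hG : G.IsTree) {x y : V} {p : G.Walk x y} (hp : p.IsPath) :
    p = treePath hG x y :=
  (hG.existsUnique_path x y).unique hp (treePath_isPath hG x y)

lemma onPath_iff (hG : G.IsTree) {x y v : V} :
    OnPath G x y v ↔ v ∈ (treePath hG x y).support := by
  refine ⟨fun h => h _ (treePath_isPath hG x y), fun hv p hp => ?_⟩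
  rwa [eq_treePath hG hp]

lemma onPath_of_isPath (hG : G.IsTree) {x y v : V} {p : G.Walk x y} (hp : p.IsPath)
    (hv : v ∈ p.support) : OnPath G x y v := by
  rwa [onPath_iff hG, ← eq_treePath hG hp]

lemma OnPath.symm {x y v : V} (h : OnPath G x y v) : OnPath G y x v := fun p hp => by
  simpa using h p.reverse hp.reverse

lemma onPath_left (x y : V) : OnPath G x y x := fun p _ => p.start_mem_support

lemma onPath_right (x y : V) : OnPath G x y y := fun p _ => p.end_mem_support

lemma takeUntil_eq_treePath [DecidableEq V] (hG : G.IsTree) {x y m : V}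
    (h : m ∈ (treePath hG x y).support) :
    (treePath hG x y).takeUntil m h = treePath hG x m :=
  eq_treePath hG ((treePath_isPath hG x y).takeUntil _)

lemma dropUntil_eq_treePath [DecidableEq V] (hG : G.IsTree) {x y m : V}
    (h : m ∈ (treePath hG x y).support) :
    (treePath hG x y).dropUntil m h = treePath hG m y :=
  eq_treePath hG ((treePath_isPath hG x y).dropUntil _)

lemma OnPath.left_or_right (hG : G.IsTree) {x y m v : V} (hm : OnPath G x y m)
    (hv : OnPath G x y v) : OnPath G x m v ∨ OnPath G m y v := by
  classical
  have hm' := (onPath_iff hG).1 hm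
  have hv' := (onPath_iff hG).1 hv
  rw [← Walk.take_spec _ hm', Walk.mem_support_append_iff, takeUntil_eq_treePath,
    dropUntil_eq_treePath] at hv'
  simpa only [onPath_iff hG] using hv'

lemma OnPath.trans_left (hG : G.IsTree) {x y m v : V} (hm : OnPath G x y m)
    (hv : OnPath G x m v) : OnPath G x y v := by
  classical
  have hm' := (onPath_iff hG).1 hm
  rw [onPath_iff hG, ← takeUntil_eq_treePath hG hm'] at hv
  exact (onPath_iff hG).2 (Walk.support_takeUntil_subset_support _ _ hv)

lemma OnPath.trans_right (hG : G.IsTree) {x y m v : V} (hm : OnPath G x y m)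
    (hv : OnPath G m y v) : OnPath G x y v :=
  (hm.symm.trans_left hG hv.symm).symm

lemma OnPath.eq_of_onPath_of_onPath (hG : G.IsTree) {x y m v : V} (hm : OnPath G x y m)
    (h₁ : OnPath G x m v) (h₂ : OnPath G m y v) : v = m := by
  classical
  have hm' := (onPath_iff hG).1 hm
  have hnd := (Walk.isPath_def _).1 (treePath_isPath hG x y)
  rw [← Walk.take_spec _ hm', Walk.support_append, List.nodup_append] at hnd
  rw [onPath_iff hG, ← takeUntil_eq_treePath hG hm'] at h₁
  rw [onPath_iff hG, ← dropUntil_eq_treePath hG hm', ← Walk.cons_tail_support,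
    List.mem_cons] at h₂
  exact h₂.resolve_right fun h => hnd.2.2 _ h₁ _ h rfl

lemma OnPath.eq_of_onPath (hG : G.IsTree) {x y m : V} (hm : OnPath G x y m)
    (hy : OnPath G x m y) : m = y :=
  (hm.eq_of_onPath_of_onPath hG hy (onPath_right m y)).symm

/-- The walk from `v` along `[x, y]` through `m` is a path, since `[x, m]` and `[m, y]` share
only `m`. -/
lemma OnPath.onPath_of_onPath_left (hG : G.IsTree) {x y m v : V} (hm : OnPath G x y m)
    (hv : OnPath G x m v) : OnPath G v y m := by
  classical
  have hm' := (onPath_iff hG).1 hm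
  have hnd := (Walk.isPath_def _).1 (treePath_isPath hG x y)
  rw [← Walk.take_spec _ hm', Walk.support_append, List.nodup_append] at hnd
  rw [onPath_iff hG, ← takeUntil_eq_treePath hG hm'] at hv
  set p := (treePath hG x y).takeUntil m hm'
  have hp : (p.dropUntil v hv).IsPath := ((treePath_isPath hG x y).takeUntil _).dropUntil _
  refine onPath_of_isPath hG (p := (p.dropUntil v hv).append ((treePath hG x y).dropUntil m hm'))
    ?_ (by simp)
  rw [Walk.isPath_def, Walk.support_append, List.nodup_append]
  exact ⟨(Walk.isPath_def _).1 hp, hnd.2.1,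
    fun z hz w hw hzw => hnd.2.2 _ (Walk.support_dropUntil_subset_support _ _ hz) _ hw hzw⟩

lemma OnPath.onPath_of_onPath_right (hG : G.IsTree) {x y m v : V} (hm : OnPath G x y m)
    (hv : OnPath G m y v) : OnPath G x v m :=
  (hm.symm.onPath_of_onPath_left hG hv.symm).symm

/-- `[z, q]` and `[q, u]` meet only at `q`, so together they form the path from `z` to `u`. -/
lemma OnPath.onPath_extend (hG : G.IsTree) {z p q u : V} (hp : OnPath G z q p)
    (hq : OnPath G p u q) (hpq : p ≠ q) : OnPath G z u q := by
  have hcons := (treePath hG q u).cons_tail_support.symm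
  have hnd := (Walk.isPath_def _).1 (treePath_isPath hG q u)
  rw [hcons, List.nodup_cons] at hnd
  refine onPath_of_isPath hG (p := (treePath hG z q).append (treePath hG q u)) ?_
    (by simp)
  rw [Walk.isPath_def, Walk.support_append, List.nodup_append]
  refine ⟨(Walk.isPath_def _).1 (treePath_isPath hG z q), hnd.2, ?_⟩
  rintro w hw₁ _ hw₂ rfl
  have hwz : OnPath G z q w := (onPath_iff hG).2 hw₁
  have hwu : OnPath G q u w := (onPath_iff hG).2 (hcons ▸ List.mem_cons_of_mem _ hw₂)
  rcases hp.left_or_right hG hwz with hw | hw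
  · have hpw : OnPath G q u p := hwu.trans_left hG (hp.onPath_of_onPath_left hG hw).symm
    exact hpq (hq.symm.eq_of_onPath hG hpw.symm).symm
  · exact hnd.1 (hq.eq_of_onPath_of_onPath hG hw hwu ▸ hw₂)

lemma onPath_adj {a b v : V} (hab : G.Adj a b) (hv : OnPath G a b v) : v = a ∨ v = b := by
  have hp : (Walk.cons hab Walk.nil).IsPath := by simp [hab.ne]
  simpa using hv _ hp

lemma IsMedian.swap_left {x y z m : V} (h : IsMedian G x y z m) : IsMedian G y x z m :=
  ⟨h.1.symm, h.2.2, h.2.1⟩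

lemma IsMedian.swap_right {x y z m : V} (h : IsMedian G x y z m) : IsMedian G x z y m :=
  ⟨h.2.2, h.2.1.symm, h.1⟩

lemma IsMedian.unique (hG : G.IsTree) {x y z m m' : V} (h : IsMedian G x y z m)
    (h' : IsMedian G x y z m') : m = m' := by
  rcases h.1.left_or_right hG h'.1 with hc | hc
  · rcases h.2.1.left_or_right hG h'.2.1 with hd | hd
    · exact (h.1.eq_of_onPath_of_onPath hG hc hd.symm).symm
    · exact (h.2.2.eq_of_onPath_of_onPath hG hc hd).symm
  · rcases h.2.2.left_or_right hG h'.2.2 with hd | hd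
    · exact (h.1.eq_of_onPath_of_onPath hG hd hc).symm
    · exact (h.2.1.eq_of_onPath_of_onPath hG hc.symm hd).symm

lemma exists_isMedian (hG : G.IsTree) (x y z : V) : ∃ m, IsMedian G x y z m := by
  suffices ∀ {x y : V} (p : G.Walk x y), p.IsPath → ∃ m, IsMedian G x y z m from
    this _ (treePath_isPath hG x y)
  intro x y p
  induction p with
  | nil => exact fun _ => ⟨_, onPath_left _ _, onPath_left _ _, onPath_left _ _⟩
  | @cons x x' y hadj p ih =>
    intro hp
    rw [Walk.cons_isPath_iff] at hp
    obtain ⟨m, hm⟩ := ih hp.1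
    have hmp : m ∈ p.support := hm.1 p hp.1
    have hmxy : OnPath G x y m :=
      onPath_of_isPath hG (p := .cons hadj p) ((Walk.cons_isPath_iff _ _).2 hp) (by simp [hmp])
    by_cases hx : OnPath G x' z x
    · rcases hx.left_or_right hG hm.2.2 with h | h
      · rcases onPath_adj hadj.symm h with rfl | rfl
        · exact ⟨x, onPath_left _ _, hm.2.1.trans_right hG hx, onPath_left _ _⟩
        · exact absurd hmp hp.2
      · exact ⟨m, hmxy, hm.2.1, h⟩
    · rw [onPath_iff hG] at hx
      have hx' : OnPath G x z x' :=
        onPath_of_isPath hG ((Walk.cons_isPath_iff hadj _).2 ⟨treePath_isPath hG x' z, hx⟩)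
          (by simp)
      exact ⟨m, hmxy, hm.2.1, hx'.trans_right hG hm.2.2⟩

lemma IsMedian.onPath_gate (hG : G.IsTree) {x y u q w : V} (hq : IsMedian G x y u q)
    (hw : OnPath G x y w) : OnPath G u w q := by
  rcases hq.1.left_or_right hG hw with hc | hc
  · exact (hq.2.2.onPath_of_onPath_left hG hc).symm
  · exact (hq.2.1.onPath_of_onPath_left hG hc.symm).symm

lemma eq_of_isMedian_quartet (hG : G.IsTree) {x y z u p r s : V} (hp : IsMedian G x y z p)
    (hp' : IsMedian G x y u p) (hr : IsMedian G x z u r) (hs : IsMedian G y z u s) :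
    r = s := by
  have of_eq : r = p → r = s := by
    rintro rfl
    exact IsMedian.unique hG ⟨hp.2.1, hr.2.1, hp'.2.1⟩ hs
  rcases hp.2.2.left_or_right hG hr.1 with hxp | hpz
  · rcases hp'.2.2.left_or_right hG hr.2.2 with hxp' | hpu
    · have hxyr : OnPath G x y r := hp.1.trans_left hG hxp
      exact of_eq (hr.2.1.eq_of_onPath_of_onPath hG (hp.onPath_gate hG hxyr)
        (hp'.onPath_gate hG hxyr).symm).symm
    · exact of_eq (hp'.2.2.eq_of_onPath_of_onPath hG hxp hpu)
  · rcases hp'.2.2.left_or_right hG hr.2.2 with hxp' | hpu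
    · exact of_eq (hp.2.2.eq_of_onPath_of_onPath hG hxp' hpz)
    · exact IsMedian.unique hG
        ⟨hp.2.1.trans_right hG hpz, hr.2.1, hp'.2.1.trans_right hG hpu⟩ hs

lemma isMedian_quartet_of_onPath (hG : G.IsTree) {x y z u p q r s : V}
    (hp : IsMedian G x y z p) (hq : IsMedian G x y u q) (hr : IsMedian G x z u r)
    (hs : IsMedian G y z u s) (hpq : p ≠ q) (hxq : OnPath G x p q) : r = q ∧ s = p := by
  have hzqp : OnPath G z q p := hp.onPath_gate hG (hp.1.trans_left hG hxq)
  have hzuq : OnPath G z u q := hzqp.onPath_extend hG (hq.onPath_gate hG hp.1).symm hpq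
  have hyup : OnPath G y u p :=
    hq.2.1.trans_left hG (hp.1.symm.onPath_of_onPath_right hG hxq.symm)
  exact ⟨hr.unique hG ⟨hp.2.2.trans_left hG hxq, hzuq, hq.2.2⟩,
    hs.unique hG ⟨hp.2.1, hzuq.trans_left hG hzqp, hyup⟩⟩

lemma isMedian_quartet (hG : G.IsTree) {x y z u p q r s : V} (hp : IsMedian G x y z p)
    (hq : IsMedian G x y u q) (hr : IsMedian G x z u r) (hs : IsMedian G y z u s) :
    (p = q ∧ r = s) ∨ (p = r ∧ q = s) ∨ (p = s ∧ q = r) := by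
  by_cases hpq : p = q
  · subst hpq
    exact Or.inl ⟨rfl, eq_of_isMedian_quartet hG hp hq hr hs⟩
  · rcases hp.1.left_or_right hG hq.1 with hxq | hqy
    · obtain ⟨hr, hs⟩ := isMedian_quartet_of_onPath hG hp hq hr hs hpq hxq
      exact Or.inr (Or.inr ⟨hs.symm, hr.symm⟩)
    · obtain ⟨hs, hr⟩ :=
        isMedian_quartet_of_onPath hG hp.swap_left hq.swap_left hs hr hpq hqy.symm
      exact Or.inr (Or.inl ⟨hr.symm, hs.symm⟩)

lemma onPath_of_strict_quartet (hG : G.IsTree) {x y z u p q : V} (hp : IsMedian G x y z p)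
    (hq : IsMedian G x z u q) (hq' : IsMedian G y z u q) (hpq : p ≠ q) :
    OnPath G x q p := by
  rcases hp.2.2.left_or_right hG hq.1 with hxp | hpz
  · exact absurd (hp.unique hG ⟨hp.1.trans_left hG hxp, hq'.1, hq.1⟩) hpq
  · exact hp.2.2.onPath_of_onPath_right hG hpz

/-- In a strict quartet `xy|zu` with inner vertices `p` and `q`, a fifth vertex `v` branches
off `[p, q]` either on the side of `p` or on the side of `q`. -/
lemma isMedian_saturation (hG : G.IsTree) {x y z u p q : V} (hp : IsMedian G x y z p)
    (hp' : IsMedian G x y u p) (hq : IsMedian G x z u q) (hq' : IsMedian G y z u q)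
    (hpq : p ≠ q) (v : V) : IsMedian G x y v p ∨ IsMedian G z u v q := by
  have hxqp := onPath_of_strict_quartet hG hp hq hq' hpq
  have hyqp := onPath_of_strict_quartet hG hp.swap_left hq' hq hpq
  have hzpq := onPath_of_strict_quartet hG hq.swap_left.swap_right hp.swap_right.swap_left
    hp'.swap_right.swap_left (Ne.symm hpq)
  have hupq := onPath_of_strict_quartet hG hq.swap_right.swap_left.swap_right
    hp'.swap_right.swap_left hp.swap_right.swap_left (Ne.symm hpq)
  obtain ⟨r, hr⟩ := exists_isMedian hG p q v
  by_cases hrq : r = q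
  · subst hrq
    have hxvr := hxqp.onPath_extend hG hr.2.2 hpq
    have hyvr := hyqp.onPath_extend hG hr.2.2 hpq
    exact Or.inl ⟨hp.1, hyvr.trans_left hG hyqp, hxvr.trans_left hG hxqp⟩
  · have hvzq := hr.2.1.symm.onPath_extend hG (hzpq.symm.onPath_of_onPath_left hG hr.1) hrq
    have hvuq := hr.2.1.symm.onPath_extend hG (hupq.symm.onPath_of_onPath_left hG hr.1) hrq
    exact Or.inr ⟨hq.2.1, hvuq.symm, hvzq.symm⟩

end Tree

/-- The four-point and five-point conditions that `t ∘ med` inherits from the medians of a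
tree. -/
structure IsTreeLike (δ : X → X → X → Option M) : Prop where
  symm : Symm3 δ
  quartet : ∀ x y z u, (δ x y z = δ x y u ∧ δ x z u = δ y z u) ∨
    (δ x y z = δ x z u ∧ δ x y u = δ y z u) ∨ (δ x y z = δ y z u ∧ δ x y u = δ x z u)
  saturation : ∀ x y z u v, δ x y z = δ x y u → δ x z u = δ y z u → δ x y z ≠ δ x z u →
    δ x y v = δ x y z ∨ δ z u v = δ z u x

section Induced

variable {G : SimpleGraph V} {leaf : X → V} {t : V → Option M} {δ : X → X → X → Option M}

lemma InducedDelta.eq_of_isMedian (hG : G.IsTree) (hδ : InducedDelta G leaf t δ) {x y z : X}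
    {m : V} (hm : IsMedian G (leaf x) (leaf y) (leaf z) m) : δ x y z = t m := by
  obtain ⟨m', hm', h⟩ := hδ x y z
  rw [h, hm'.unique hG hm]

lemma InducedDelta.isTreeLike (hG : G.IsTree) (hδ : InducedDelta G leaf t δ) :
    IsTreeLike δ where
  symm x y z := by
    obtain ⟨m, hm⟩ := exists_isMedian hG (leaf x) (leaf y) (leaf z)
    simp only [hδ.eq_of_isMedian hG hm, hδ.eq_of_isMedian hG hm.swap_left,
      hδ.eq_of_isMedian hG hm.swap_right, hδ.eq_of_isMedian hG hm.swap_left.swap_right.swap_left,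
      and_self]
  quartet x y z u := by
    obtain ⟨p, hp⟩ := exists_isMedian hG (leaf x) (leaf y) (leaf z)
    obtain ⟨q, hq⟩ := exists_isMedian hG (leaf x) (leaf y) (leaf u)
    obtain ⟨r, hr⟩ := exists_isMedian hG (leaf x) (leaf z) (leaf u)
    obtain ⟨s, hs⟩ := exists_isMedian hG (leaf y) (leaf z) (leaf u)
    simp only [hδ.eq_of_isMedian hG hp, hδ.eq_of_isMedian hG hq, hδ.eq_of_isMedian hG hr,
      hδ.eq_of_isMedian hG hs]
    rcases isMedian_quartet hG hp hq hr hs with ⟨rfl, rfl⟩ | ⟨rfl, rfl⟩ | ⟨rfl, rfl⟩ <;> simp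
  saturation x y z u v hpq hrs hpr := by
    obtain ⟨p, hp⟩ := exists_isMedian hG (leaf x) (leaf y) (leaf z)
    obtain ⟨q, hq⟩ := exists_isMedian hG (leaf x) (leaf y) (leaf u)
    obtain ⟨r, hr⟩ := exists_isMedian hG (leaf x) (leaf z) (leaf u)
    obtain ⟨s, hs⟩ := exists_isMedian hG (leaf y) (leaf z) (leaf u)
    simp only [hδ.eq_of_isMedian hG hp, hδ.eq_of_isMedian hG hq, hδ.eq_of_isMedian hG hr,
      hδ.eq_of_isMedian hG hs] at hpq hrs hpr
    rcases isMedian_quartet hG hp hq hr hs with ⟨rfl, rfl⟩ | ⟨rfl, -⟩ | ⟨rfl, rfl⟩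
    · rcases isMedian_saturation hG hp hq hr hs (fun h => hpr (congrArg t h)) (leaf v) with
        h | h
      · exact Or.inl (by rw [hδ.eq_of_isMedian hG h, hδ.eq_of_isMedian hG hp])
      · exact Or.inr (by rw [hδ.eq_of_isMedian hG h,
          hδ.eq_of_isMedian hG hr.swap_left.swap_right])
    · exact absurd rfl hpr
    · exact absurd hrs.symm hpr

lemma IsTreeLike.eq_of_split (h : IsTreeLike δ) {x y z u : X} (hxy : δ x y z = δ x y u) :
    δ x z u = δ y z u := by
  rcases h.quartet x y z u with ⟨-, h'⟩ | ⟨h₁, h₂⟩ | ⟨h₁, h₂⟩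
  · exact h'
  · rw [← h₁, hxy, h₂]
  · rw [← h₂, ← hxy, h₁]

end Induced

section Cherry

variable {δ : X → X → X → Option M}

def IsCherry (δ : X → X → X → Option M) (S : Finset X) (x y : X) : Prop :=
  x ∈ S ∧ y ∈ S ∧ x ≠ y ∧ ∃ α, ∀ k ∈ S, k ≠ x → k ≠ y → δ x y k = α

lemma isCherry_of_mem {S : Finset X} {a b c d e : X}
    (hS : ∀ k, k ∈ S ↔ k = a ∨ k = b ∨ k = c ∨ k = d ∨ k = e) (hab : a ≠ b)
    (hd : δ a b d = δ a b c) (he : δ a b e = δ a b c) : IsCherry δ S a b := by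
  refine ⟨(hS a).2 (by simp), (hS b).2 (by simp), hab, δ a b c, fun k hk hka hkb => ?_⟩
  rcases (hS k).1 hk with rfl | rfl | rfl | rfl | rfl
  exacts [absurd rfl hka, absurd rfl hkb, rfl, hd, he]

/-- A non-strict split is constant, and then the four-point condition on `x, y, z, v` yields a
cherry among `x, y, z`; a strict split yields one by saturation. -/
lemma IsTreeLike.exists_isCherry_of_split (h : IsTreeLike δ) {S : Finset X} {x y z u v : X}
    (hS : ∀ k, k ∈ S ↔ k = x ∨ k = y ∨ k = z ∨ k = u ∨ k = v)
    (hxy : x ≠ y) (hxz : x ≠ z) (hyz : y ≠ z) (hzu : z ≠ u) (hsplit : δ x y z = δ x y u) :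
    ∃ a b, IsCherry δ S a b := by
  have s₁ := fun x y z => (h.symm x y z).1
  have s₂ := fun x y z => (h.symm x y z).2.1
  have hzu' : δ x z u = δ y z u := h.eq_of_split hsplit
  by_cases hstrict : δ x y z = δ x z u
  · rcases h.quartet x y z v with ⟨hv, -⟩ | ⟨hv, -⟩ | ⟨hv, -⟩
    · exact ⟨x, y, isCherry_of_mem hS hxy hsplit.symm hv.symm⟩
    · refine ⟨x, z, isCherry_of_mem (c := y) (d := u) (e := v) ?_ hxz (by grind) (by grind)⟩
      exact fun k => (hS k).trans (by simp only [or_left_comm])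
    · refine ⟨y, z, isCherry_of_mem (c := x) (d := u) (e := v) ?_ hyz (by grind) (by grind)⟩
      exact fun k => (hS k).trans (by simp only [or_left_comm])
  · rcases h.saturation x y z u v hsplit hzu' hstrict with hv | hv
    · exact ⟨x, y, isCherry_of_mem hS hxy hsplit.symm hv⟩
    · refine ⟨z, u, isCherry_of_mem (c := x) (d := y) (e := v) ?_ hzu (by grind) hv⟩
      exact fun k => (hS k).trans (by simp only [or_left_comm])

end Cherry

section Count

open Finset

lemma card_filter_powersetCard_succ_insert {α : Type*} [DecidableEq α] {s : Finset α} {x : α}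
    (hx : x ∉ s) (n : ℕ) (P : Finset α → Prop) [DecidablePred P] :
    #{t ∈ (insert x s).powersetCard (n + 1) | P t} =
      #{t ∈ s.powersetCard (n + 1) | P t} + #{t ∈ s.powersetCard n | P (insert x t)} := by
  rw [powersetCard_succ_insert hx, filter_union, card_union_of_disjoint, filter_image,
    card_image_of_injOn]
  · intro t ht t' ht' h
    simp only [coe_filter, mem_powersetCard] at ht ht'
    exact insert_erase_invOn.2.injOn (notMem_mono ht.1.1 hx) (notMem_mono ht'.1.1 hx) h
  · refine disjoint_left.2 fun t ht ht' => ?_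
    obtain ⟨t', -, rfl⟩ := mem_image.1 (mem_filter.1 ht').1
    exact hx (mem_powersetCard.1 (mem_filter.1 ht).1 |>.1 (mem_insert_self x t'))

variable [DecidableEq X] {δ : X → X → X → Option M}

noncomputable def tripleCount (δ : X → X → X → Option M) (S : Finset X) (c : Option M) : ℕ :=
  {T : Finset X | T ∈ S.powersetCard 3 ∧ ValOn δ T c}.ncard

lemma tripleCount_eq_card_filter (S : Finset X) (c : Option M)
    [DecidablePred fun T => ValOn δ T c] :
    tripleCount δ S c = #{T ∈ S.powersetCard 3 | ValOn δ T c} := by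
  rw [tripleCount, ← coe_filter, Set.ncard_coe_finset]

lemma valOn_triple_iff (hδ : Symm3 δ) {x y z : X} (hxy : x ≠ y) (hxz : x ≠ z) (hyz : y ≠ z)
    (c : Option M) : ValOn δ {x, y, z} c ↔ δ x y z = c := by
  refine ⟨?_, fun h => ⟨x, y, z, hxy, hxz, hyz, rfl, h⟩⟩
  rintro ⟨a, b, d, hab, had, hbd, hT, rfl⟩
  have mem : ∀ w, w = a ∨ w = b ∨ w = d → w = x ∨ w = y ∨ w = z := by
    simpa using fun w => (Finset.ext_iff.1 hT w).2
  have h₁ := fun x y z => (hδ x y z).1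
  have h₂ := fun x y z => (hδ x y z).2.1
  rcases mem a (by simp) with rfl | rfl | rfl <;> rcases mem b (by simp) with rfl | rfl | rfl <;>
    rcases mem d (by simp) with rfl | rfl | rfl <;> grind

lemma IsTreeLike.even_tripleCount (h : IsTreeLike δ) {Q : Finset X} (hQ : Q.card = 4)
    (c : Option M) : Even (tripleCount δ Q c) := by
  classical
  obtain ⟨w, x, y, z, hwx, hwy, hwz, hxy, hxz, hyz, rfl⟩ := card_eq_four.1 hQ
  have e₁ : ({z} : Finset X).powersetCard 1 = {{z}} := by simp [powersetCard_one]
  have e₂ : ({z} : Finset X).powersetCard 2 = ∅ := by simp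
  have e₃ : ({z} : Finset X).powersetCard 3 = ∅ := by simp
  rw [tripleCount_eq_card_filter]
  simp only [card_filter_powersetCard_succ_insert, mem_insert, mem_singleton, hwx, hwy, hwz,
    hxy, hxz, hyz, or_self, not_false_eq_true, Nat.reduceAdd, e₁, e₂, e₃, powersetCard_zero,
    filter_empty, card_empty, filter_singleton, apply_ite card, card_singleton, insert_empty_eq,
    valOn_triple_iff h.symm, ne_eq]
  rcases h.quartet w x y z with ⟨h₁, h₂⟩ | ⟨h₁, h₂⟩ | ⟨h₁, h₂⟩ <;> simp only [h₁, h₂] <;>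
    split_ifs <;> decide

lemma IsTreeLike.exists_isCherry (h : IsTreeLike δ) {S : Finset X} (hS : S.card = 5) :
    ∃ x y, IsCherry δ S x y := by
  obtain ⟨x, T, hxT, rfl, hT⟩ := card_eq_succ.1 hS
  obtain ⟨y, z, u, v, hyz, hyu, -, hzu, -, -, rfl⟩ := card_eq_four.1 hT
  have hmem : ∀ k, k ∈ (insert x {y, z, u, v} : Finset X) ↔
      k = x ∨ k = y ∨ k = z ∨ k = u ∨ k = v := by
    simp
  simp only [mem_insert, mem_singleton, not_or] at hxT
  obtain ⟨hxy, hxz, hxu, -⟩ := hxT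
  have s₁ := fun x y z => (h.symm x y z).1
  have s₂ := fun x y z => (h.symm x y z).2.1
  rcases h.quartet x y z u with ⟨hsplit, -⟩ | ⟨hsplit, -⟩ | ⟨hsplit, -⟩
  · exact h.exists_isCherry_of_split hmem hxy hxz hyz hzu hsplit
  · refine h.exists_isCherry_of_split (y := z) (z := y) (u := u) (v := v) ?_
      hxz hxy (Ne.symm hyz) hyu (by grind)
    exact fun k => (hmem k).trans (by simp only [or_left_comm])
  · refine h.exists_isCherry_of_split (x := y) (y := z) (z := x) (u := u) (v := v) ?_
      hyz (Ne.symm hxy) (Ne.symm hxz) hxu (by grind)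
    exact fun k => (hmem k).trans (by simp only [or_left_comm])

open Classical in
/-- With `δ x y · = α` on `K`, the 3-subsets of `{x, y} ∪ K` are `K`, the sets `{x, k, l}` and
`{y, k, l}` (which have equal values), and the sets `{x, y, k}`. -/
lemma IsTreeLike.tripleCount_insert_insert (h : IsTreeLike δ) {K : Finset X} {x y : X}
    {α : Option M} (hxy : x ≠ y) (hxK : x ∉ K) (hyK : y ∉ K) (hα : ∀ k ∈ K, δ x y k = α)
    (c : Option M) :
    tripleCount δ (insert x (insert y K)) c = #{T ∈ K.powersetCard 3 | ValOn δ T c} +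
      2 * #{T ∈ K.powersetCard 2 | ValOn δ (insert x T) c} +
      (if α = c then #K else 0) := by
  have hswap : #{T ∈ K.powersetCard 2 | ValOn δ (insert y T) c} =
      #{T ∈ K.powersetCard 2 | ValOn δ (insert x T) c} := by
    refine congrArg card (filter_congr fun T hT => ?_)
    obtain ⟨hTK, hT2⟩ := mem_powersetCard.1 hT
    obtain ⟨k, l, hkl, rfl⟩ := card_eq_two.1 hT2
    have hk : k ∈ K := hTK (by simp)
    have hl : l ∈ K := hTK (by simp)
    rw [valOn_triple_iff h.symm (ne_of_mem_of_not_mem hk hyK).symm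
        (ne_of_mem_of_not_mem hl hyK).symm hkl,
      valOn_triple_iff h.symm (ne_of_mem_of_not_mem hk hxK).symm
        (ne_of_mem_of_not_mem hl hxK).symm hkl,
      h.eq_of_split ((hα k hk).trans (hα l hl).symm)]
  have hpairs : #{T ∈ K.powersetCard 1 | ValOn δ (insert x (insert y T)) c} =
      if α = c then #K else 0 := by
    have hval : ∀ T ∈ K.powersetCard 1, ValOn δ (insert x (insert y T)) c ↔ α = c := by
      intro T hT
      obtain ⟨k, rfl⟩ := card_eq_one.1 (mem_powersetCard.1 hT).2
      have hk : k ∈ K := mem_powersetCard.1 hT |>.1 (mem_singleton_self k)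
      rw [valOn_triple_iff h.symm hxy (ne_of_mem_of_not_mem hk hxK).symm
        (ne_of_mem_of_not_mem hk hyK).symm, hα k hk]
    split_ifs with hαc
    · rw [filter_true_of_mem fun T hT => (hval T hT).2 hαc, card_powersetCard,
        Nat.choose_one_right]
    · rw [filter_false_of_mem fun T hT => mt (hval T hT).1 hαc, card_empty]
  rw [tripleCount_eq_card_filter, card_filter_powersetCard_succ_insert (by simp [hxy, hxK]),
    card_filter_powersetCard_succ_insert hyK, card_filter_powersetCard_succ_insert hyK, hswap,
    hpairs]
  ring

lemma IsTreeLike.tripleCount_ne_five_of_isCherry (h : IsTreeLike δ) {S : Finset X}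
    (hS : S.card = 5) {x y : X} (hc : IsCherry δ S x y) (c : Option M) :
    tripleCount δ S c ≠ 5 := by
  classical
  obtain ⟨hx, hy, hxy, α, hα⟩ := hc
  have hy' : y ∈ S.erase x := mem_erase.2 ⟨hxy.symm, hy⟩
  set K := (S.erase x).erase y with hK
  have hxK : x ∉ K := fun hx' => notMem_erase x S (mem_of_mem_erase hx')
  have hK3 : K.card = 3 := by rw [hK, card_erase_of_mem hy', card_erase_of_mem hx, hS]
  have hSK : S = insert x (insert y K) := by rw [hK, insert_erase hy', insert_erase hx]
  have hαK : ∀ k ∈ K, δ x y k = α := fun k hk => by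
    simp only [hK, mem_erase] at hk
    exact hα k hk.2.2 hk.2.1 hk.1
  have heven : Even (#{T ∈ K.powersetCard 3 | ValOn δ T c} +
      #{T ∈ K.powersetCard 2 | ValOn δ (insert x T) c}) := by
    have := h.even_tripleCount (Q := insert x K) (by rw [card_insert_of_notMem hxK, hK3]) c
    rwa [tripleCount_eq_card_filter, card_filter_powersetCard_succ_insert hxK] at this
  have hKle : #{T ∈ K.powersetCard 3 | ValOn δ T c} ≤ 1 :=
    (card_filter_le _ _).trans (by rw [card_powersetCard, hK3, Nat.choose_self])
  rw [hSK, h.tripleCount_insert_insert hxy hxK (notMem_erase y _) hαK, hK3]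
  rw [Nat.even_iff] at heven
  split_ifs <;> omega

theorem IsTreeLike.tripleCount_ne_five (h : IsTreeLike δ) {S : Finset X} (hS : S.card = 5)
    (c : Option M) : tripleCount δ S c ≠ 5 :=
  have ⟨_, _, hc⟩ := h.exists_isCherry hS
  h.tripleCount_ne_five_of_isCherry hS hc c

end Count

theorem induced_delta_no_five_five_partition_general
    {V X M : Type} [DecidableEq X]
    (G : SimpleGraph V) (leaf : X → V) (t : V → Option M)
    (hT : IsPhyloTree G leaf)
    (δ : X → X → X → Option M) (hδ : InducedDelta G leaf t δ) :
    ∀ S : Finset X, S.card = 5 → ¬ Partitioned δ S 5 5 := by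
  rintro S hS ⟨a, -, -, ha, -⟩
  exact (hδ.isTreeLike hT.isTree).tripleCount_ne_five hS a ha

/-- No 5-element subset of `X` is 5-5 partitioned by the ternary map
induced by a discriminating symbolically dated phylogenetic tree. -/
theorem induced_delta_no_five_five_partition
    {V X M : Type} [Fintype V] [Fintype X] [DecidableEq X] [Fintype M] [Nonempty M]
    (hX : 3 ≤ Fintype.card X)
    (G : SimpleGraph V) (leaf : X → V) (t : V → Option M)
    (hT : IsPhyloTree G leaf) (ht : IsDatingMap leaf t) (hdisc : Discriminating G t)
    (δ : X → X → X → Option M) (hδ : InducedDelta G leaf t δ) :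
    ∀ S : Finset X, S.card = 5 → ¬ Partitioned δ S 5 5 :=
  induced_delta_no_five_five_partition_general G leaf t hT δ hδ

end PhyloPaper
end
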